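/- arXiv:2005.06042 — 6 statements merged into one kernel-verified Lean document; each statement's English description precedes it below -/
import Mathlib

section
/- Let T > 0, 0 < γ ≤ Γ ≤ T, Δt > 0 with K = T/Δt a positive integer and γ/Δt, Γ/Δt positive integers, and η⁺, η⁻ ∈ (0,1]. Let 𝐱^b, 𝐱^r ∈ ℝ^K have nonnegative components, let 𝐝 ∈ ℝ^K have nonnegative components, and assume that for every k ∈ {1,…,K} either d_k = 0 or x^b_k = x^r_k = 0. Set x^b = L𝐱^b, x^r = L𝐱^r, d = L𝐝, and fix y₀ ∈ ℝ and y̲ ∈ ℝ. Then y(x^b,x^r,δ,y₀,t) ≥ y̲ for all δ ∈ D and all t ∈ [0,T] if and only if y_k(𝐱^b,𝐱^r,𝛅,y₀) ≥ y̲ for all 𝛅 ∈ D_K and all k ∈ {0,1,…,K}; indeed inf_{t ∈ [0,T]} inf_{δ ∈ D} y(x^b,x^r,δ,y₀,t) = min_{k ∈ {0,…,K}} min_{𝛅 ∈ D_K} y_k(𝐱^b,𝐱^r,𝛅,y₀). -/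
/-!
On each period the rate `u ↦ ηp (a + u r)⁺ - (a + u r)⁻ / ηm - d` is concave and nondecreasing
in the deviation `u` (as `r ≥ 0` and `ηp ηm ≤ 1`), so it lies above its chord between `u = 0`
and `u = -1`, weighted by `|u|`. Integrating over the periods met by `[0, t]`, `y(δ, t)` is
bounded below by a function that is affine in the `|δ|`-masses `ν i ∈ [0, 1]` of the periods,
and these masses obey the window constraints of `D_K`. Rounding `ν` by the increments of
`⌊∑ j < i, ν j - θ⌋` for a suitable `θ ∈ (0, 1)` keeps the window constraints and does not
increase the bound, giving a `{0, -1}`-vector of `D_K`; stopping just before or just after the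
period containing `t` takes care of `t` off the grid. Conversely, the lift of a vector of `D_K`
lies in `D` and reproduces the discrete state of charge at the grid points, so the two robust
constraints and the two infima agree.
-/

open MeasureTheory Set

noncomputable section

/-- The continuous-time uncertainty set `D` of measurable frequency-deviation
scenarios `δ : [0,T] → [-1,1]` whose total absolute deviation over every
backward window of length `Γ` is at most `γ`. -/
def Dset (T Γ γ : ℝ) : Set (ℝ → ℝ) :=
  {δ | Measurable δ ∧ (∀ t ∈ Icc (0:ℝ) T, δ t ∈ Icc (-1:ℝ) 1) ∧
    ∀ t ∈ Icc (0:ℝ) T, (∫ s in (max (t - Γ) 0)..t, |δ s|) ≤ γ}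

/-- The nonnegative part `D⁺` of the continuous uncertainty set. -/
def DsetPlus (T Γ γ : ℝ) : Set (ℝ → ℝ) :=
  Dset T Γ γ ∩ {δ | ∀ t ∈ Icc (0:ℝ) T, δ t ∈ Icc (0:ℝ) 1}

/-- The discrete uncertainty set `D_K` (with `0`-based indexing): vectors in
`[-1,1]^K` whose sum of absolute values over each backward window of `W = Γ/Δt`
periods is at most `g = γ/Δt`. -/
def DK (K W g : ℕ) : Set (Fin K → ℝ) :=
  {δ | (∀ l, |δ l| ≤ 1) ∧ ∀ k : Fin K,
    (∑ l ∈ Finset.univ.filter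
      (fun l : Fin K => (k : ℕ) + 1 - W ≤ (l : ℕ) ∧ (l : ℕ) ≤ (k : ℕ)), |δ l|) ≤ (g : ℝ)}

/-- The nonnegative part `D_K⁺` of the discrete uncertainty set. -/
def DKplus (K W g : ℕ) : Set (Fin K → ℝ) :=
  DK K W g ∩ {δ | ∀ l, 0 ≤ δ l}

/-- The lifting operator `L` mapping a vector to the piecewise constant function
with value `v k` on `[kΔt, (k+1)Δt)` (0-based), and `v (K-1)` at `t = KΔt`. -/
def lift (Δt : ℝ) {K : ℕ} (v : Fin K → ℝ) : ℝ → ℝ := fun t =>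
  if h : min (⌊t / Δt⌋.toNat) (K - 1) < K then v ⟨min (⌊t / Δt⌋.toNat) (K - 1), h⟩ else 0

/-- The averaging operator `L†` mapping a function to its vector of averages
over the trading intervals. -/
def avg (Δt : ℝ) (K : ℕ) (w : ℝ → ℝ) : Fin K → ℝ := fun k =>
  (1 / Δt) * ∫ s in (((k : ℕ) : ℝ) * Δt)..((((k : ℕ) : ℝ) + 1) * Δt), w s

/-- The integrand of the continuous-time state-of-charge. -/
def socIntegrand (ηp ηm : ℝ) (xb xr δ d : ℝ → ℝ) (s : ℝ) : ℝ :=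
  ηp * max (xb s + δ s * xr s) 0 - (1 / ηm) * max (-(xb s + δ s * xr s)) 0 - d s

/-- The continuous-time state-of-charge `y(x^b, x^r, δ, y₀, t)`. -/
def soc (ηp ηm : ℝ) (xb xr δ d : ℝ → ℝ) (y0 t : ℝ) : ℝ :=
  y0 + ∫ s in (0:ℝ)..t, socIntegrand ηp ηm xb xr δ d s

/-- The discrete-time state-of-charge `y_k(𝐱^b, 𝐱^r, 𝛅, y₀)` (0-based indexing:
the sum extends over the first `k` components). -/
def ysoc (Δt ηp ηm : ℝ) {K : ℕ} (xb xr δ d : Fin K → ℝ) (y0 : ℝ) (k : ℕ) : ℝ :=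
  y0 + Δt * ∑ l ∈ Finset.univ.filter (fun l : Fin K => (l : ℕ) < k),
    (ηp * max (xb l + δ l * xr l) 0 - (1 / ηm) * max (-(xb l + δ l * xr l)) 0 - d l)

theorem intervalIntegrable_of_abs_le {f : ℝ → ℝ} {a b C : ℝ} (hab : a ≤ b) (hf : Measurable f)
    (hC : ∀ x ∈ Icc a b, |f x| ≤ C) : IntervalIntegrable f volume a b := by
  rw [intervalIntegrable_iff_integrableOn_Ioc_of_le hab]
  exact Measure.integrableOn_of_bounded measure_Ioc_lt_top.ne hf.aestronglyMeasurable
    ((ae_restrict_iff' measurableSet_Ioc).2 (ae_of_all _ fun x hx => hC x (Ioc_subset_Icc_self hx)))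

theorem exists_mem_Ioo_le_of_intervalIntegral_le {f : ℝ → ℝ} {a b c : ℝ} (hab : a < b)
    (hf : IntervalIntegrable f volume a b) (h : ∫ x in a..b, f x ≤ (b - a) * c) :
    ∃ x ∈ Ioo a b, f x ≤ c := by
  by_contra! hlt
  have hpos := intervalIntegral.intervalIntegral_pos_of_pos_on (hf.sub intervalIntegrable_const)
    (fun x hx => sub_pos.2 (hlt x hx)) hab
  rw [intervalIntegral.integral_sub hf intervalIntegrable_const, intervalIntegral.integral_const,
    smul_eq_mul] at hpos
  linarith

theorem intervalIntegrable_floor_sub (x : ℝ) :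
    IntervalIntegrable (fun θ : ℝ => (⌊x - θ⌋ : ℝ)) volume 0 1 :=
  Antitone.intervalIntegrable fun _ _ h => by
    simpa using Int.floor_le_floor (sub_le_sub_left h x)

theorem integral_floor_sub (x : ℝ) : ∫ θ in (0:ℝ)..1, (⌊x - θ⌋ : ℝ) = x - 1 := by
  have hf₀ := Int.fract_nonneg x
  have hf₁ := Int.fract_lt_one x
  have hx := Int.floor_add_fract x
  have hleft : EqOn (fun θ : ℝ => (⌊x - θ⌋ : ℝ)) (fun _ => (⌊x⌋ : ℝ)) (Ioo 0 (Int.fract x)) := by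
    rintro θ ⟨hθ₀, hθ⟩
    simp only [Int.cast_inj, Int.floor_eq_iff]
    constructor <;> linarith
  have hright : EqOn (fun θ : ℝ => (⌊x - θ⌋ : ℝ)) (fun _ => (⌊x⌋ : ℝ) - 1)
      (Ioo (Int.fract x) 1) := by
    rintro θ ⟨hθ, hθ₁⟩
    have : ⌊x - θ⌋ = ⌊x⌋ - 1 := by rw [Int.floor_eq_iff]; push_cast; constructor <;> linarith
    simp [this]
  have hint := intervalIntegrable_floor_sub x
  rw [← intervalIntegral.integral_add_adjacent_intervals (b := Int.fract x)
      (hint.mono_set (uIcc_subset_uIcc_left (by simp [hf₀, hf₁.le])))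
      (hint.mono_set (uIcc_subset_uIcc_right (by simp [hf₀, hf₁.le]))),
    intervalIntegral.integral_congr_Ioo_of_le hf₀ hleft,
    intervalIntegral.integral_congr_Ioo_of_le hf₁.le hright]
  simp only [intervalIntegral.integral_const, smul_eq_mul]
  linarith

/-- A randomized rounding of `ν`: its partial sums stay within one unit of those of `ν`. -/
def floorRound (ν : ℕ → ℝ) (θ : ℝ) (i : ℕ) : ℤ :=
  ⌊(∑ j ∈ Finset.range (i + 1), ν j) - θ⌋ - ⌊(∑ j ∈ Finset.range i, ν j) - θ⌋

section floorRound

variable {ν : ℕ → ℝ}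

theorem floorRound_eq_zero_or_one (θ : ℝ) {i : ℕ} (h₀ : 0 ≤ ν i) (h₁ : ν i ≤ 1) :
    floorRound ν θ i = 0 ∨ floorRound ν θ i = 1 := by
  unfold floorRound
  rw [Finset.sum_range_succ]
  set F := ∑ j ∈ Finset.range i, ν j
  have hlo : ⌊F - θ⌋ ≤ ⌊F + ν i - θ⌋ := Int.floor_le_floor (by linarith)
  have hhi : ⌊F + ν i - θ⌋ ≤ ⌊F - θ⌋ + 1 := by
    rw [← Int.floor_add_one]; exact Int.floor_le_floor (by linarith)
  omega

theorem sum_Ico_floorRound (θ : ℝ) {p q : ℕ} (hpq : p ≤ q) :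
    ∑ i ∈ Finset.Ico p q, floorRound ν θ i =
      ⌊(∑ j ∈ Finset.range q, ν j) - θ⌋ - ⌊(∑ j ∈ Finset.range p, ν j) - θ⌋ :=
  Finset.sum_Ico_sub (fun m => ⌊(∑ j ∈ Finset.range m, ν j) - θ⌋) hpq

theorem integral_floorRound (i : ℕ) : ∫ θ in (0:ℝ)..1, (floorRound ν θ i : ℝ) = ν i := by
  simp only [floorRound, Int.cast_sub]
  rw [intervalIntegral.integral_sub (intervalIntegrable_floor_sub _)
    (intervalIntegrable_floor_sub _), integral_floor_sub, integral_floor_sub,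
    Finset.sum_range_succ]
  ring

theorem intervalIntegrable_floorRound (i : ℕ) :
    IntervalIntegrable (fun θ => (floorRound ν θ i : ℝ)) volume 0 1 := by
  simp only [floorRound, Int.cast_sub]
  exact (intervalIntegrable_floor_sub _).sub (intervalIntegrable_floor_sub _)

end floorRound

theorem exists_finset_card_le_sum_le {ν : ℕ → ℝ} (hν₀ : ∀ i, 0 ≤ ν i) (hν₁ : ∀ i, ν i ≤ 1)
    (e : ℕ → ℝ) (n : ℕ) :
    ∃ E ⊆ Finset.range n,
      (∀ p q m : ℕ, ∑ i ∈ Finset.Ico p q, ν i ≤ m → (E ∩ Finset.Ico p q).card ≤ m) ∧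
      ∑ i ∈ E, e i ≤ ∑ i ∈ Finset.range n, ν i * e i := by
  have hint : IntervalIntegrable (fun θ => ∑ i ∈ Finset.range n, (floorRound ν θ i : ℝ) * e i)
      volume 0 1 := by
    simpa only [Finset.sum_fn] using IntervalIntegrable.sum (Finset.range n) fun i _ =>
      (intervalIntegrable_floorRound (ν := ν) i).mul_const (e i)
  -- `floorRound ν θ i` has mean `ν i` over `θ ∈ (0, 1)`, so some `θ` does no worse than the mean.
  obtain ⟨θ, -, hθ⟩ := exists_mem_Ioo_le_of_intervalIntegral_le zero_lt_one hint
      (c := ∑ i ∈ Finset.range n, ν i * e i) <| by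
    rw [intervalIntegral.integral_finsetSum fun i _ =>
      (intervalIntegrable_floorRound i).mul_const _]
    simp [intervalIntegral.integral_mul_const, integral_floorRound]
  have h01 := fun i => floorRound_eq_zero_or_one (ν := ν) θ (hν₀ i) (hν₁ i)
  refine ⟨(Finset.range n).filter (floorRound ν θ · = 1), Finset.filter_subset _ _,
    fun p q m hm => ?_, ?_⟩
  · rcases le_total q p with hqp | hpq
    · simp [Finset.Ico_eq_empty_of_le hqp]
    have hcard : (((Finset.range n).filter (floorRound ν θ · = 1) ∩ Finset.Ico p q).card : ℤ) ≤
        ∑ i ∈ Finset.Ico p q, floorRound ν θ i := by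
      rw [Finset.inter_comm, ← Finset.filter_mem_eq_inter, Finset.card_filter, Nat.cast_sum]
      refine Finset.sum_le_sum fun i _ => ?_
      split_ifs with hi
      · simp [(Finset.mem_filter.1 hi).2]
      · rcases h01 i with h | h <;> simp [h]
    have hfloor : ⌊(∑ j ∈ Finset.range q, ν j) - θ⌋ ≤ ⌊(∑ j ∈ Finset.range p, ν j) - θ⌋ + m := by
      rw [← Int.floor_add_natCast]
      refine Int.floor_le_floor ?_
      rw [← Finset.sum_range_add_sum_Ico ν hpq]
      linarith
    rw [sum_Ico_floorRound θ hpq] at hcard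
    omega
  · calc ∑ i ∈ (Finset.range n).filter (floorRound ν θ · = 1), e i
        = ∑ i ∈ Finset.range n, (floorRound ν θ i : ℝ) * e i := by
          rw [Finset.sum_filter]
          refine Finset.sum_congr rfl fun i _ => ?_
          rcases h01 i with h | h <;> simp [h]
      _ ≤ _ := by simpa using hθ

theorem sum_ite_mem_eq_add {s E : Finset ℕ} (hE : E ⊆ s) (a b : ℕ → ℝ) :
    ∑ i ∈ s, (if i ∈ E then b i else a i) = ∑ i ∈ s, a i + ∑ i ∈ E, (b i - a i) := by
  rw [← Finset.inter_eq_right.2 hE, ← Finset.sum_ite_mem, ← Finset.sum_add_distrib]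
  refine Finset.sum_congr rfl fun i hi => ?_
  by_cases h : i ∈ E <;> simp [h, hi]

/-- `ℓ i` is the elapsed fraction of period `i` (complete before `k₀`, empty after it) and
`ν i ≤ ℓ i` the part of it spent at the rate `b i` instead of `a i`. -/
theorem exists_prefix_sum_le {ν ℓ : ℕ → ℝ} (a b : ℕ → ℝ) {n k₀ : ℕ}
    (hν₀ : ∀ i, 0 ≤ ν i) (hνℓ : ∀ i, ν i ≤ ℓ i) (hℓ₁ : ∀ i, ℓ i ≤ 1)
    (hfull : ∀ i < k₀, ℓ i = 1) (hempty : ∀ i, k₀ < i → ℓ i = 0) :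
    ∃ E : Finset ℕ,
      (∀ p q m : ℕ, ∑ i ∈ Finset.Ico p q, ν i ≤ m → (E ∩ Finset.Ico p q).card ≤ m) ∧
      ∃ k ≤ n, ∑ i ∈ Finset.range k, (if i ∈ E then b i else a i) ≤
        ∑ i ∈ Finset.range n, (ℓ i * a i + ν i * (b i - a i)) := by
  have hν₁ i := (hνℓ i).trans (hℓ₁ i)
  rcases le_or_gt n k₀ with hn | hn
  · obtain ⟨E, hE, hcard, hval⟩ := exists_finset_card_le_sum_le hν₀ hν₁ (fun i => b i - a i) n
    refine ⟨E, hcard, n, le_rfl, ?_⟩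
    rw [sum_ite_mem_eq_add hE, Finset.sum_add_distrib]
    gcongr with i hi
    rw [hfull i ((Finset.mem_range.1 hi).trans_le hn), one_mul]
  -- In the partial period, a cost `a k₀ > 0` can be avoided by stopping before it.
  set a' : ℕ → ℝ := fun i => if i = k₀ then min 0 (a i) else a i
  obtain ⟨E, hE, hcard, hval⟩ :=
    exists_finset_card_le_sum_le hν₀ hν₁ (fun i => b i - a' i) (k₀ + 1)
  have ha' : ∀ i < k₀, a' i = a i := fun i hi => if_neg hi.ne
  have hprefix : ∑ i ∈ Finset.range k₀, (if i ∈ E then b i else a' i) =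
      ∑ i ∈ Finset.range k₀, (if i ∈ E then b i else a i) :=
    Finset.sum_congr rfl fun i hi => by rw [ha' i (Finset.mem_range.1 hi)]
  refine ⟨E, hcard, if k₀ ∉ E ∧ 0 < a k₀ then k₀ else k₀ + 1, by split_ifs <;> omega, ?_⟩
  calc ∑ i ∈ Finset.range (if k₀ ∉ E ∧ 0 < a k₀ then k₀ else k₀ + 1),
        (if i ∈ E then b i else a i)
      ≤ ∑ i ∈ Finset.range (k₀ + 1), (if i ∈ E then b i else a' i) := by
        rw [Finset.sum_range_succ _ k₀, hprefix, show a' k₀ = min 0 (a k₀) from if_pos rfl]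
        by_cases hk : k₀ ∈ E
        · simp [hk, Finset.sum_range_succ]
        by_cases ha : 0 < a k₀
        · simp [hk, ha, ha.le]
        · simp [hk, ha, Finset.sum_range_succ, min_eq_right (not_lt.1 ha)]
    _ = ∑ i ∈ Finset.range (k₀ + 1), a' i + ∑ i ∈ E, (b i - a' i) := sum_ite_mem_eq_add hE a' b
    _ ≤ ∑ i ∈ Finset.range (k₀ + 1), (a' i + ν i * (b i - a' i)) := by
        rw [Finset.sum_add_distrib]; gcongr
    _ ≤ ∑ i ∈ Finset.range (k₀ + 1), (ℓ i * a i + ν i * (b i - a i)) := by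
        refine Finset.sum_le_sum fun i hi => ?_
        rcases (Nat.lt_succ_iff.1 (Finset.mem_range.1 hi)).lt_or_eq with hi | rfl
        · rw [ha' i hi, hfull i hi, one_mul]
        · simp only [a', if_pos rfl]
          have hℓν : 0 ≤ ℓ i - ν i := sub_nonneg.2 (hνℓ i)
          nlinarith [mul_le_mul_of_nonneg_left (min_le_right 0 (a i)) hℓν,
            mul_le_mul_of_nonpos_right (sub_le_sub_right (hℓ₁ i) (ν i)) (min_le_left 0 (a i))]
    _ = ∑ i ∈ Finset.range n, (ℓ i * a i + ν i * (b i - a i)) := by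
        rw [← Finset.sum_range_add_sum_Ico _ hn, Finset.sum_eq_zero (s := Finset.Ico _ _),
          add_zero]
        intro i hi
        have hℓ := hempty i (Finset.mem_Ico.1 hi).1
        have hν : ν i = 0 := le_antisymm (hℓ ▸ hνℓ i) (hν₀ i)
        simp [hℓ, hν]

theorem sum_mul_le_of_window {w ℓ : ℕ → ℝ} {j W : ℕ} {g α Δt : ℝ} (n : ℕ) (hW : 1 ≤ W)
    (hw : ∀ i, 0 ≤ w i) (hℓ₀ : ∀ i, 0 ≤ ℓ i) (hℓΔ : ∀ i, ℓ i ≤ Δt)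
    (hℓ : ∀ i ∉ Finset.Icc j (j + W), ℓ i = 0) (hj : ℓ j ≤ Δt - α) (hjW : ℓ (j + W) ≤ α)
    (hS : ∀ p, ∑ i ∈ Finset.Ico p (p + W), w i ≤ g) :
    ∑ i ∈ Finset.range n, ℓ i * w i ≤ g * Δt := by
  have hsupp : ∑ i ∈ Finset.range n, ℓ i * w i ≤ ∑ i ∈ Finset.Icc j (j + W), ℓ i * w i := by
    rw [← Finset.sum_filter_of_ne (p := (· ∈ Finset.Icc j (j + W))) fun i _ h =>
      by_contra fun hi => h (by rw [hℓ i hi, zero_mul])]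
    exact Finset.sum_le_sum_of_subset_of_nonneg (fun i hi => (Finset.mem_filter.1 hi).2)
      fun i _ _ => mul_nonneg (hℓ₀ i) (hw i)
  have hmid : ∑ i ∈ Finset.Ico (j + 1) (j + W), ℓ i * w i ≤
      Δt * ∑ i ∈ Finset.Ico (j + 1) (j + W), w i := by
    rw [Finset.mul_sum]
    exact Finset.sum_le_sum fun i _ => mul_le_mul_of_nonneg_right (hℓΔ i) (hw i)
  have hSj := hS j
  have hSj₁ := hS (j + 1)
  rw [Finset.sum_eq_sum_Ico_succ_bot (by omega)] at hSj
  rw [show j + 1 + W = j + W + 1 by ring, Finset.sum_Ico_succ_top (by omega)] at hSj₁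
  rw [← Finset.Ico_add_one_right_eq_Icc, Finset.sum_Ico_succ_top (by omega),
    Finset.sum_eq_sum_Ico_succ_bot (by omega)] at hsupp
  have hα₀ : 0 ≤ α := (hℓ₀ _).trans hjW
  have hαΔ : 0 ≤ Δt - α := (hℓ₀ _).trans hj
  -- `∑ ℓ i w i ≤ (Δt - α) S j + α S (j + 1)` for the window sums `S p` of `w`.
  nlinarith [mul_le_mul_of_nonneg_right hj (hw j), mul_le_mul_of_nonneg_right hjW (hw (j + W)),
    mul_le_mul_of_nonneg_left hSj hαΔ, mul_le_mul_of_nonneg_left hSj₁ hα₀]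

theorem ConcaveOn.chord_le_of_monotone {φ : ℝ → ℝ} (hc : ConcaveOn ℝ univ φ) (hm : Monotone φ)
    (a : ℝ) {r u : ℝ} (hr : 0 ≤ r) (hu : |u| ≤ 1) :
    (1 - |u|) * φ a + |u| * φ (a - r) ≤ φ (a + u * r) := by
  rcases le_total u 0 with hu₀ | hu₀
  · rw [abs_of_nonpos hu₀] at hu ⊢
    have := hc.2 (mem_univ a) (mem_univ (a - r)) (by linarith : 0 ≤ 1 - -u) (by linarith : 0 ≤ -u)
      (by ring)
    simp only [smul_eq_mul] at this
    exact this.trans_eq (congrArg φ (by ring))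
  · rw [abs_of_nonneg hu₀] at hu ⊢
    have h₁ : φ (a - r) ≤ φ a := hm (by linarith)
    have h₂ : φ a ≤ φ (a + u * r) := hm (by nlinarith)
    nlinarith

def netCharge (ηp ηm z : ℝ) : ℝ := ηp * max z 0 - (1 / ηm) * max (-z) 0

section netCharge

variable {ηp ηm : ℝ}

theorem netCharge_eq_min (hηm : 0 < ηm) (hη : ηp * ηm ≤ 1) (z : ℝ) :
    netCharge ηp ηm z = min (ηp * z) (z / ηm) := by
  have hinv : ηp ≤ 1 / ηm := by rw [le_div_iff₀ hηm]; exact hη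
  unfold netCharge
  rcases le_total 0 z with hz | hz
  · rw [max_eq_left hz, max_eq_right (neg_nonpos.2 hz), min_eq_left (by
      rw [div_eq_mul_one_div, mul_comm z]; exact mul_le_mul_of_nonneg_right hinv hz)]
    ring
  · rw [max_eq_right hz, max_eq_left (neg_nonneg.2 hz), min_eq_right (by
      rw [div_eq_mul_one_div, mul_comm z]; exact mul_le_mul_of_nonpos_right hinv hz)]
    ring

theorem concaveOn_netCharge (hηm : 0 < ηm) (hη : ηp * ηm ≤ 1) :
    ConcaveOn ℝ univ (netCharge ηp ηm) := by
  rw [show netCharge ηp ηm = (fun z => ηp * z) ⊓ (fun z => z / ηm) from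
    funext (netCharge_eq_min hηm hη)]
  exact ((LinearMap.mul ℝ ℝ ηp).concaveOn convex_univ).inf
    (((LinearMap.mul ℝ ℝ ηm⁻¹).concaveOn convex_univ).congr fun z _ => by
      simp [div_eq_inv_mul])

theorem monotone_netCharge (hηp : 0 ≤ ηp) (hηm : 0 ≤ ηm) : Monotone (netCharge ηp ηm) :=
  fun _ _ h => by
    unfold netCharge
    gcongr

theorem continuous_netCharge : Continuous (netCharge ηp ηm) := by
  unfold netCharge
  fun_prop

end netCharge

/-- Consecutive values cut `[a, b]` along the grid `Δt ℕ`. -/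
def gridClamp (Δt a b : ℝ) (i : ℕ) : ℝ := max a (min b (i * Δt))

section gridClamp

variable {Δt a b t : ℝ}

theorem gridClamp_mono (hΔt : 0 ≤ Δt) : Monotone (gridClamp Δt a b) := fun i j h => by
  unfold gridClamp
  gcongr

theorem gridClamp_mem_Icc (hab : a ≤ b) (i : ℕ) : gridClamp Δt a b i ∈ Icc a b :=
  ⟨le_max_left _ _, max_le hab (min_le_left _ _)⟩

theorem gridClamp_of_le_left {i : ℕ} (h : i * Δt ≤ a) : gridClamp Δt a b i = a :=
  max_eq_left ((min_le_right _ _).trans h)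

theorem gridClamp_of_right_le {i : ℕ} (hab : a ≤ b) (h : b ≤ i * Δt) : gridClamp Δt a b i = b := by
  rw [gridClamp, min_eq_left h, max_eq_right hab]

theorem gridClamp_of_mem {i : ℕ} (h₁ : a ≤ i * Δt) (h₂ : i * Δt ≤ b) :
    gridClamp Δt a b i = i * Δt := by
  rw [gridClamp, min_eq_right h₂, max_eq_right h₁]

theorem gridClamp_zero (ha : 0 ≤ a) : gridClamp Δt a b 0 = a :=
  gridClamp_of_le_left (by simpa using ha)

theorem gridClamp_sub_le (hΔt : 0 ≤ Δt) {p q : ℕ} (hpq : p ≤ q) :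
    gridClamp Δt a b q - gridClamp Δt a b p ≤ (q - p) * Δt := by
  have : (p : ℝ) * Δt ≤ q * Δt := by gcongr
  simp only [gridClamp, max_def, min_def]
  split_ifs <;> linarith

theorem gridClamp_succ_sub_le (hΔt : 0 ≤ Δt) (i : ℕ) :
    gridClamp Δt a b (i + 1) - gridClamp Δt a b i ≤ Δt := by
  simpa using gridClamp_sub_le (a := a) (b := b) hΔt (Nat.le_succ i)

theorem Ioo_gridClamp_subset (hab : a ≤ b) (i : ℕ) :
    Ioo (gridClamp Δt a b i) (gridClamp Δt a b (i + 1)) ⊆ Ico (i * Δt) ((i + 1) * Δt) := by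
  rintro s ⟨h₁, h₂⟩
  have hsb : s < b := h₂.trans_le (gridClamp_mem_Icc hab _).2
  have has : a < s := (gridClamp_mem_Icc hab i).1.trans_lt h₁
  simp only [gridClamp, lt_max_iff, max_lt_iff, lt_min_iff, min_lt_iff, Nat.cast_succ] at h₁ h₂
  constructor
  · rcases h₁.2 with h | h <;> linarith
  · rcases h₂ with h | ⟨-, h⟩ <;> linarith

theorem gridClamp_succ_sub_eq_zero_of_le_left (hΔt : 0 ≤ Δt) {i : ℕ}
    (h : ((i + 1 : ℕ) : ℝ) * Δt ≤ a) : gridClamp Δt a b (i + 1) - gridClamp Δt a b i = 0 := by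
  rw [gridClamp_of_le_left h, gridClamp_of_le_left (h.trans' (by gcongr; simp)), sub_self]

theorem gridClamp_succ_sub_eq_zero_of_right_le (hΔt : 0 ≤ Δt) (hab : a ≤ b) {i : ℕ}
    (h : b ≤ i * Δt) : gridClamp Δt a b (i + 1) - gridClamp Δt a b i = 0 := by
  rw [gridClamp_of_right_le hab h, gridClamp_of_right_le hab (h.trans (by gcongr; simp)), sub_self]

theorem gridClamp_succ_sub_le_succ_mul_sub {i : ℕ} (h : a ≤ (i + 1) * Δt) :
    gridClamp Δt a b (i + 1) - gridClamp Δt a b i ≤ (i + 1) * Δt - a := by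
  have h₁ : gridClamp Δt a b (i + 1) ≤ (i + 1) * Δt := by
    simp only [gridClamp, Nat.cast_succ]
    exact max_le h (min_le_right _ _)
  have h₂ : a ≤ gridClamp Δt a b i := le_max_left _ _
  linarith

theorem gridClamp_succ_sub_le_sub_mul (hab : a ≤ b) (i : ℕ) :
    gridClamp Δt a b (i + 1) - gridClamp Δt a b i ≤ max (b - i * Δt) 0 := by
  have h₁ : min b (i * Δt) ≤ gridClamp Δt a b i := le_max_right _ _
  have h₂ := (gridClamp_mem_Icc (Δt := Δt) hab (i + 1)).2
  rcases le_total b (i * Δt) with h | h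
  · rw [min_eq_left h] at h₁
    linarith [le_max_right (b - i * Δt) 0]
  · rw [min_eq_right h] at h₁
    linarith [le_max_left (b - i * Δt) 0]

theorem gridClamp_succ_sub_of_lt (hΔt : 0 < Δt) (ht : 0 ≤ t) {i : ℕ} (hi : i < ⌊t / Δt⌋₊) :
    gridClamp Δt 0 t (i + 1) - gridClamp Δt 0 t i = Δt := by
  have h : ((i + 1 : ℕ) : ℝ) * Δt ≤ t :=
    (le_div_iff₀ hΔt).1 ((Nat.le_floor_iff (div_nonneg ht hΔt.le)).1 hi)
  rw [gridClamp_of_mem (by positivity) h,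
    gridClamp_of_mem (by positivity) (h.trans' (by gcongr; simp))]
  push_cast
  ring

theorem gridClamp_succ_sub_of_gt (hΔt : 0 < Δt) (ht : 0 ≤ t) {i : ℕ} (hi : ⌊t / Δt⌋₊ < i) :
    gridClamp Δt 0 t (i + 1) - gridClamp Δt 0 t i = 0 := by
  refine gridClamp_succ_sub_eq_zero_of_right_le hΔt.le ht ?_
  have h₁ := (div_lt_iff₀ hΔt).1 (Nat.lt_floor_add_one (t / Δt))
  have h₂ : (⌊t / Δt⌋₊ : ℝ) + 1 ≤ i := by exact_mod_cast hi
  nlinarith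

theorem integral_eq_sum_gridClamp {f : ℝ → ℝ} {K : ℕ} (ha : 0 ≤ a) (hab : a ≤ b)
    (hb : b ≤ K * Δt)
    (hf : ∀ l : Fin K,
      IntervalIntegrable f volume (gridClamp Δt a b l) (gridClamp Δt a b (l + 1))) :
    ∫ s in a..b, f s = ∑ l : Fin K, ∫ s in gridClamp Δt a b l..gridClamp Δt a b (l + 1), f s := by
  rw [Fin.sum_univ_eq_sum_range (fun i => ∫ s in gridClamp Δt a b i..gridClamp Δt a b (i + 1), f s),
    intervalIntegral.sum_integral_adjacent_intervals fun i hi => hf ⟨i, hi⟩, gridClamp_zero ha,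
    gridClamp_of_right_le hab hb]

end gridClamp

def zeroExtend {K : ℕ} (v : Fin K → ℝ) (i : ℕ) : ℝ := if h : i < K then v ⟨i, h⟩ else 0

section zeroExtend

variable {K : ℕ}

@[simp]
theorem zeroExtend_val (v : Fin K → ℝ) (l : Fin K) : zeroExtend v l = v l := by
  simp [zeroExtend]

theorem zeroExtend_of_le (v : Fin K → ℝ) {i : ℕ} (hi : K ≤ i) : zeroExtend v i = 0 := by
  simp [zeroExtend, hi.not_gt]

theorem sum_filter_val_mem (u : Fin K → ℝ) (s : Finset ℕ) :
    ∑ l ∈ Finset.univ.filter (fun l : Fin K => (l : ℕ) ∈ s), u l = ∑ i ∈ s, zeroExtend u i := by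
  rw [Finset.sum_filter]
  simp_rw [← zeroExtend_val u]
  rw [Fin.sum_univ_eq_sum_range (fun i => if i ∈ s then zeroExtend u i else 0), Finset.sum_ite_mem]
  refine Finset.sum_subset Finset.inter_subset_right fun i hs hi => zeroExtend_of_le u ?_
  simpa [hs] using hi

end zeroExtend

theorem mem_DK_iff {K W g : ℕ} {δ : Fin K → ℝ} :
    δ ∈ DK K W g ↔ (∀ l, |δ l| ≤ 1) ∧
      ∀ p, ∑ i ∈ Finset.Ico p (p + W), zeroExtend (fun l => |δ l|) i ≤ g := by
  have hwin (k : Fin K) : ∑ l ∈ Finset.univ.filter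
      (fun l : Fin K => (k : ℕ) + 1 - W ≤ (l : ℕ) ∧ (l : ℕ) ≤ (k : ℕ)), |δ l| =
        ∑ i ∈ Finset.Ico (k + 1 - W) (k + 1), zeroExtend (fun l => |δ l|) i := by
    rw [← sum_filter_val_mem]
    congr 1
    ext l
    simp only [Finset.mem_filter, Finset.mem_univ, true_and, Finset.mem_Ico]
    omega
  have hnonneg (i : ℕ) : 0 ≤ zeroExtend (fun l => |δ l|) i := by
    unfold zeroExtend
    split <;> simp
  simp only [DK, mem_ofPred_eq, hwin]
  refine and_congr_right fun _ => ⟨fun h p => ?_, fun h k => ?_⟩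
  · rcases lt_or_ge p (min (p + W) K) with hp | hp
    · -- Up to indices `≥ K`, the window starting at `p` is inside the one ending at `q - 1`.
      set q := min (p + W) K
      calc ∑ i ∈ Finset.Ico p (p + W), zeroExtend (fun l => |δ l|) i
          = ∑ i ∈ Finset.Ico p q, zeroExtend (fun l => |δ l|) i := by
            refine (Finset.sum_subset (Finset.Ico_subset_Ico_right (min_le_left _ _))
              fun i hi hi' => zeroExtend_of_le _ ?_).symm
            simp only [Finset.mem_Ico, not_and, not_lt] at hi hi'
            omega
        _ ≤ ∑ i ∈ Finset.Ico (q - 1 + 1 - W) (q - 1 + 1), zeroExtend (fun l => |δ l|) i :=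
            Finset.sum_le_sum_of_subset_of_nonneg (Finset.Ico_subset_Ico (by omega) (by omega))
              fun i _ _ => hnonneg i
        _ ≤ g := h ⟨q - 1, by omega⟩
    · rw [Finset.sum_eq_zero fun i hi => zeroExtend_of_le _ ?_]
      · exact Nat.cast_nonneg g
      · simp only [Finset.mem_Ico] at hi
        omega
  · exact (Finset.sum_le_sum_of_subset_of_nonneg (Finset.Ico_subset_Ico_right (by omega))
      fun i _ _ => hnonneg i).trans (h (k + 1 - W))

section lift

variable {Δt : ℝ} {K : ℕ}

theorem lift_of_mem_Ico (hΔt : 0 < Δt) (v : Fin K → ℝ) (l : Fin K) {s : ℝ}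
    (hs : s ∈ Ico ((l : ℝ) * Δt) (((l : ℝ) + 1) * Δt)) : lift Δt v s = v l := by
  have hfloor : ⌊s / Δt⌋ = (l : ℕ) := by
    rw [Int.floor_eq_iff, le_div_iff₀ hΔt, div_lt_iff₀ hΔt]
    push_cast
    exact hs
  have hidx : min ⌊s / Δt⌋.toNat (K - 1) = l := by
    rw [hfloor, Int.toNat_natCast]
    exact min_eq_left (by omega)
  simp [lift, hidx]

theorem measurable_lift (v : Fin K → ℝ) : Measurable (lift Δt v) :=
  measurable_from_nat.comp (g := fun n => if h : min n (K - 1) < K then v ⟨_, h⟩ else 0)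
    ((Measurable.of_discrete (f := Int.toNat)).comp
      (Int.measurable_floor.comp (measurable_id.div_const Δt)))

theorem lift_mem {S : Set ℝ} {v : Fin K → ℝ} (hv : ∀ l, v l ∈ S) (h₀ : (0 : ℝ) ∈ S) (s : ℝ) :
    lift Δt v s ∈ S := by
  unfold lift
  split
  exacts [hv _, h₀]

theorem abs_lift (v : Fin K → ℝ) (s : ℝ) : |lift Δt v s| = lift Δt (fun l => |v l|) s := by
  unfold lift
  split <;> simp

theorem lift_eqOn_Ioo_gridClamp (hΔt : 0 < Δt) (v : Fin K → ℝ) {a b : ℝ} (hab : a ≤ b) (l : Fin K) :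
    EqOn (lift Δt v) (fun _ => v l) (Ioo (gridClamp Δt a b l) (gridClamp Δt a b (l + 1))) :=
  fun _ hs => lift_of_mem_Ico hΔt v l (Ioo_gridClamp_subset hab l hs)

theorem integral_lift (hΔt : 0 < Δt) (v : Fin K → ℝ) {a b : ℝ} (ha : 0 ≤ a) (hab : a ≤ b)
    (hb : b ≤ K * Δt) :
    ∫ s in a..b, lift Δt v s =
      ∑ l : Fin K, (gridClamp Δt a b (l + 1) - gridClamp Δt a b l) * v l := by
  have hmono l := gridClamp_mono (a := a) (b := b) hΔt.le (Nat.le_succ l)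
  rw [integral_eq_sum_gridClamp ha hab hb fun l =>
    intervalIntegrable_const.congr_uIoo ((uIoo_of_le (hmono l)).symm ▸
      (lift_eqOn_Ioo_gridClamp hΔt v hab l).symm)]
  refine Finset.sum_congr rfl fun l _ => ?_
  rw [intervalIntegral.integral_congr_Ioo_of_le (hmono l) (lift_eqOn_Ioo_gridClamp hΔt v hab l),
    intervalIntegral.integral_const, smul_eq_mul]

theorem integral_lift_le_of_window (hΔt : 0 < Δt) {W : ℕ} {g : ℝ} {w : Fin K → ℝ}
    (hw : ∀ l, 0 ≤ w l) (hS : ∀ p, ∑ i ∈ Finset.Ico p (p + W), zeroExtend w i ≤ g) {a b : ℝ}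
    (ha : 0 ≤ a) (hab : a ≤ b) (hb : b ≤ K * Δt) (hba : b - a ≤ W * Δt) :
    ∫ s in a..b, lift Δt w s ≤ g * Δt := by
  rcases Nat.eq_zero_or_pos W with rfl | hW
  · obtain rfl : b = a := by simp only [CharP.cast_eq_zero, zero_mul] at hba; linarith
    simpa using mul_nonneg (by simpa using hS 0) hΔt.le
  set j := ⌊a / Δt⌋₊
  have hja : j * Δt ≤ a := (le_div_iff₀ hΔt).1 (Nat.floor_le (div_nonneg ha hΔt.le))
  have haj : a < (j + 1) * Δt := (div_lt_iff₀ hΔt).1 (Nat.lt_floor_add_one _)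
  have hw' (i : ℕ) : 0 ≤ zeroExtend w i := by
    unfold zeroExtend
    split
    exacts [hw _, le_rfl]
  rw [integral_lift hΔt w ha hab hb]
  simp_rw [← zeroExtend_val w]
  rw [Fin.sum_univ_eq_sum_range fun i =>
    (gridClamp Δt a b (i + 1) - gridClamp Δt a b i) * zeroExtend w i]
  refine sum_mul_le_of_window (j := j) (α := a - j * Δt) K hW hw'
    (fun i => sub_nonneg.2 (gridClamp_mono hΔt.le (Nat.le_succ i)))
    (gridClamp_succ_sub_le hΔt.le) (fun i hi => ?_) ?_ ?_ hS
  · rcases (not_and_or.1 (Finset.mem_Icc.not.1 hi)).imp Nat.lt_of_not_le Nat.lt_of_not_le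
      with hi | hi
    · exact gridClamp_succ_sub_eq_zero_of_le_left hΔt.le
        (hja.trans' (by gcongr; exact_mod_cast hi))
    · refine gridClamp_succ_sub_eq_zero_of_right_le hΔt.le hab ?_
      have : ((j + W + 1 : ℕ) : ℝ) ≤ i := by exact_mod_cast hi
      push_cast at this
      nlinarith
  · linarith [gridClamp_succ_sub_le_succ_mul_sub (b := b) (i := j) haj.le]
  · have := gridClamp_succ_sub_le_sub_mul (Δt := Δt) hab (j + W)
    push_cast at this
    exact this.trans (max_le (by linarith) (by linarith))

theorem lift_mem_Dset (hΔt : 0 < Δt) {W g : ℕ} {T Γ γ : ℝ} (hT : T = K * Δt) (hΓ : Γ = W * Δt)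
    (hγ : γ = g * Δt) {δ : Fin K → ℝ} (hδ : δ ∈ DK K W g) : lift Δt δ ∈ Dset T Γ γ := by
  rw [mem_DK_iff] at hδ
  have hΓ₀ : 0 ≤ Γ := hΓ ▸ by positivity
  refine ⟨measurable_lift δ, fun t _ => lift_mem (fun l => abs_le.1 (hδ.1 l)) (by simp) t,
    fun t ht => ?_⟩
  simp_rw [abs_lift, hγ]
  exact integral_lift_le_of_window hΔt (fun l => abs_nonneg _) hδ.2 (le_max_right _ _)
    (max_le (by linarith [ht.1]) ht.1) (hT ▸ ht.2) (by linarith [le_max_left (t - Γ) 0])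

end lift

def cellRate (ηp ηm : ℝ) {K : ℕ} (xb xr d : Fin K → ℝ) (u : ℝ) (l : Fin K) : ℝ :=
  netCharge ηp ηm (xb l + u * xr l) - d l

section cellRate

variable {Δt ηp ηm : ℝ} {K : ℕ} {xb xr d : Fin K → ℝ}

theorem ysoc_eq (δ : Fin K → ℝ) (y0 : ℝ) (k : ℕ) :
    ysoc Δt ηp ηm xb xr δ d y0 k =
      y0 + Δt * ∑ l ∈ Finset.univ.filter (fun l : Fin K => (l : ℕ) < k),
        cellRate ηp ηm xb xr d (δ l) l :=
  rfl

theorem socIntegrand_lift (δ : Fin K → ℝ) (s : ℝ) :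
    socIntegrand ηp ηm (lift Δt xb) (lift Δt xr) (lift Δt δ) (lift Δt d) s =
      lift Δt (fun l => cellRate ηp ηm xb xr d (δ l) l) s := by
  unfold socIntegrand lift cellRate netCharge
  split <;> simp

theorem soc_lift_natCast_mul (hΔt : 0 < Δt) (δ : Fin K → ℝ) (y0 : ℝ) {k : ℕ} (hk : k ≤ K) :
    soc ηp ηm (lift Δt xb) (lift Δt xr) (lift Δt δ) (lift Δt d) y0 (k * Δt) =
      ysoc Δt ηp ηm xb xr δ d y0 k := by
  have hlen (l : ℕ) : gridClamp Δt 0 (k * Δt) (l + 1) - gridClamp Δt 0 (k * Δt) l =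
      if l < k then Δt else 0 := by
    split_ifs with hl
    · have h₁ : ((l + 1 : ℕ) : ℝ) * Δt ≤ k * Δt := by gcongr; exact_mod_cast hl
      have h₂ : (l : ℝ) * Δt ≤ k * Δt := by gcongr
      rw [gridClamp_of_mem (by positivity) h₁, gridClamp_of_mem (by positivity) h₂]
      push_cast
      ring
    · have h₁ : (k : ℝ) * Δt ≤ l * Δt := by gcongr; exact_mod_cast not_lt.1 hl
      have h₂ : (k : ℝ) * Δt ≤ ((l + 1 : ℕ) : ℝ) * Δt := h₁.trans (by gcongr; simp)
      rw [gridClamp_of_right_le (by positivity) h₁, gridClamp_of_right_le (by positivity) h₂,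
        sub_self]
  simp only [soc, socIntegrand_lift, ysoc_eq]
  rw [integral_lift hΔt _ le_rfl (by positivity) (by gcongr), Finset.sum_filter, Finset.mul_sum]
  simp only [hlen, ite_mul, zero_mul, mul_ite, mul_zero]

theorem cellRate_chord (hηp : 0 ≤ ηp) (hηm : 0 < ηm) (hη : ηp * ηm ≤ 1) (hxr : ∀ l, 0 ≤ xr l)
    (l : Fin K) {u : ℝ} (hu : |u| ≤ 1) :
    cellRate ηp ηm xb xr d 0 l + |u| * (cellRate ηp ηm xb xr d (-1) l - cellRate ηp ηm xb xr d 0 l)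
      ≤ cellRate ηp ηm xb xr d u l := by
  have := (concaveOn_netCharge hηm hη).chord_le_of_monotone (monotone_netCharge hηp hηm.le)
    (xb l) (hxr l) hu
  simp only [cellRate, zero_mul, add_zero, neg_one_mul, ← sub_eq_add_neg]
  linarith

theorem monotone_cellRate (hηp : 0 ≤ ηp) (hηm : 0 ≤ ηm) (hxr : ∀ l, 0 ≤ xr l) (l : Fin K) :
    Monotone fun u => cellRate ηp ηm xb xr d u l := fun _ _ h =>
  sub_le_sub_right (monotone_netCharge hηp hηm (by gcongr; exact hxr l)) _

theorem continuous_cellRate (l : Fin K) : Continuous fun u => cellRate ηp ηm xb xr d u l :=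
  (continuous_netCharge.comp (continuous_const.add (continuous_id.mul continuous_const))).sub
    continuous_const

end cellRate

section cell

variable {Δt ηp ηm x y : ℝ} {K : ℕ} {xb xr d : Fin K → ℝ} {δ : ℝ → ℝ} {l : Fin K}

theorem socIntegrand_eqOn_cell (hΔt : 0 < Δt) (hcell : Ioo x y ⊆ Ico (l * Δt) ((l + 1) * Δt)) :
    EqOn (socIntegrand ηp ηm (lift Δt xb) (lift Δt xr) δ (lift Δt d))
      (fun s => cellRate ηp ηm xb xr d (δ s) l) (Ioo x y) := fun s hs => by
  simp only [socIntegrand, cellRate, netCharge, lift_of_mem_Ico hΔt _ l (hcell hs)]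

theorem intervalIntegrable_cellRate_comp (hηp : 0 ≤ ηp) (hηm : 0 ≤ ηm) (hxr : ∀ l, 0 ≤ xr l)
    (hxy : x ≤ y) (hδ : Measurable δ) (hδ₁ : ∀ s ∈ Icc x y, |δ s| ≤ 1) :
    IntervalIntegrable (fun s => cellRate ηp ηm xb xr d (δ s) l) volume x y :=
  intervalIntegrable_of_abs_le hxy ((continuous_cellRate l).measurable.comp hδ) fun s hs =>
    abs_le_max_abs_abs (monotone_cellRate hηp hηm hxr l (abs_le.1 (hδ₁ s hs)).1)
      (monotone_cellRate hηp hηm hxr l (abs_le.1 (hδ₁ s hs)).2)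

theorem intervalIntegrable_socIntegrand_cell (hΔt : 0 < Δt) (hηp : 0 ≤ ηp) (hηm : 0 ≤ ηm)
    (hxr : ∀ l, 0 ≤ xr l) (hxy : x ≤ y) (hcell : Ioo x y ⊆ Ico (l * Δt) ((l + 1) * Δt))
    (hδ : Measurable δ) (hδ₁ : ∀ s ∈ Icc x y, |δ s| ≤ 1) :
    IntervalIntegrable (socIntegrand ηp ηm (lift Δt xb) (lift Δt xr) δ (lift Δt d)) volume x y :=
  (intervalIntegrable_cellRate_comp hηp hηm hxr hxy hδ hδ₁).congr_uIoo
    ((uIoo_of_le hxy).symm ▸ (socIntegrand_eqOn_cell hΔt hcell).symm)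

theorem integral_socIntegrand_cell_ge (hΔt : 0 < Δt) (hηp : 0 ≤ ηp) (hηm : 0 < ηm)
    (hη : ηp * ηm ≤ 1) (hxr : ∀ l, 0 ≤ xr l) (hxy : x ≤ y)
    (hcell : Ioo x y ⊆ Ico (l * Δt) ((l + 1) * Δt)) (hδ : Measurable δ)
    (hδ₁ : ∀ s ∈ Icc x y, |δ s| ≤ 1) :
    (y - x) * cellRate ηp ηm xb xr d 0 l +
        (∫ s in x..y, |δ s|) * (cellRate ηp ηm xb xr d (-1) l - cellRate ηp ηm xb xr d 0 l) ≤
      ∫ s in x..y, socIntegrand ηp ηm (lift Δt xb) (lift Δt xr) δ (lift Δt d) s := by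
  have hδint : IntervalIntegrable (fun s => |δ s|) volume x y :=
    intervalIntegrable_of_abs_le hxy hδ.abs fun s hs => by simpa using hδ₁ s hs
  rw [intervalIntegral.integral_congr_Ioo_of_le hxy (socIntegrand_eqOn_cell hΔt hcell),
    ← intervalIntegral.integral_mul_const, ← smul_eq_mul, ← intervalIntegral.integral_const,
    ← intervalIntegral.integral_add intervalIntegrable_const (hδint.mul_const _)]
  exact intervalIntegral.integral_mono_on_of_le_Ioo hxy
    (intervalIntegrable_const.add (hδint.mul_const _))
    (intervalIntegrable_cellRate_comp hηp hηm.le hxr hxy hδ hδ₁)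
    fun s hs => cellRate_chord hηp hηm hη hxr l (hδ₁ s (Ioo_subset_Icc_self hs))

theorem soc_ge_sum_cells (hΔt : 0 < Δt) (hηp : 0 ≤ ηp) (hηm : 0 < ηm) (hη : ηp * ηm ≤ 1)
    (hxr : ∀ l, 0 ≤ xr l) (hδ : Measurable δ) {t : ℝ} (ht₀ : 0 ≤ t) (ht : t ≤ K * Δt)
    (hδ₁ : ∀ s ∈ Icc 0 t, |δ s| ≤ 1) (y0 : ℝ) :
    y0 + ∑ l : Fin K,
        ((gridClamp Δt 0 t (l + 1) - gridClamp Δt 0 t l) * cellRate ηp ηm xb xr d 0 l +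
          (∫ s in gridClamp Δt 0 t l..gridClamp Δt 0 t (l + 1), |δ s|) *
            (cellRate ηp ηm xb xr d (-1) l - cellRate ηp ηm xb xr d 0 l)) ≤
      soc ηp ηm (lift Δt xb) (lift Δt xr) δ (lift Δt d) y0 t := by
  have hmono (i : ℕ) := gridClamp_mono (a := 0) (b := t) hΔt.le (Nat.le_succ i)
  have hδ₁' (i : ℕ) : ∀ s ∈ Icc (gridClamp Δt 0 t i) (gridClamp Δt 0 t (i + 1)), |δ s| ≤ 1 :=
    fun s hs => hδ₁ s (Icc_subset_Icc (gridClamp_mem_Icc ht₀ i).1 (gridClamp_mem_Icc ht₀ _).2 hs)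
  rw [soc, integral_eq_sum_gridClamp le_rfl ht₀ ht fun l =>
    intervalIntegrable_socIntegrand_cell hΔt hηp hηm.le hxr (hmono l)
      (Ioo_gridClamp_subset ht₀ l) hδ (hδ₁' l)]
  gcongr with l
  exact integral_socIntegrand_cell_ge hΔt hηp hηm hη hxr (hmono l) (Ioo_gridClamp_subset ht₀ l) hδ
    (hδ₁' l)

end cell

section Dset

variable {Δt t T Γ γ : ℝ} {δ : ℝ → ℝ}

theorem intervalIntegrable_abs_of_mem_Dset (hδ : δ ∈ Dset T Γ γ) {x y : ℝ} (hx : 0 ≤ x)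
    (hxy : x ≤ y) (hy : y ≤ T) : IntervalIntegrable (fun s => |δ s|) volume x y :=
  intervalIntegrable_of_abs_le hxy hδ.1.abs fun s hs => by
    simpa using abs_le.2 (hδ.2.1 s ⟨hx.trans hs.1, hs.2.trans hy⟩)

theorem integral_abs_gridClamp_le (hΔt : 0 < Δt) (hδ : δ ∈ Dset T Γ γ) (ht : t ∈ Icc 0 T)
    (i : ℕ) :
    ∫ s in gridClamp Δt 0 t i..gridClamp Δt 0 t (i + 1), |δ s| ≤
      gridClamp Δt 0 t (i + 1) - gridClamp Δt 0 t i := by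
  have hmono := gridClamp_mono (a := 0) (b := t) hΔt.le (Nat.le_succ i)
  have hc := gridClamp_mem_Icc (Δt := Δt) ht.1 i
  have hc' := gridClamp_mem_Icc (Δt := Δt) ht.1 (i + 1)
  simpa using intervalIntegral.integral_mono_on hmono
    (intervalIntegrable_abs_of_mem_Dset hδ hc.1 hmono (hc'.2.trans ht.2))
    intervalIntegrable_const fun s hs =>
      abs_le.2 (hδ.2.1 s ⟨hc.1.trans hs.1, hs.2.trans (hc'.2.trans ht.2)⟩)

/-- The masses of `|δ|` on `W` consecutive cells lie in one window of length `Γ = W Δt`. -/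
theorem sum_Ico_integral_abs_gridClamp_le {W : ℕ} (hΔt : 0 < Δt) (hΓ : Γ = W * Δt)
    (hδ : δ ∈ Dset T Γ γ) (ht : t ∈ Icc 0 T) (p : ℕ) :
    ∑ i ∈ Finset.Ico p (p + W), ∫ s in gridClamp Δt 0 t i..gridClamp Δt 0 t (i + 1), |δ s| ≤ γ := by
  have hc (i : ℕ) := gridClamp_mem_Icc (Δt := Δt) ht.1 i
  have hcT (i : ℕ) : gridClamp Δt 0 t i ≤ T := (hc i).2.trans ht.2
  have hmono := gridClamp_mono (a := 0) (b := t) hΔt.le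
  have hpW := hmono (Nat.le_add_right p W)
  rw [intervalIntegral.sum_integral_adjacent_intervals_Ico (Nat.le_add_right p W) fun i _ =>
    intervalIntegrable_abs_of_mem_Dset hδ (hc i).1 (hmono (Nat.le_succ i)) (hcT _)]
  have hstart : max (gridClamp Δt 0 t (p + W) - Γ) 0 ≤ gridClamp Δt 0 t p := by
    refine max_le ?_ (hc p).1
    have := gridClamp_sub_le (a := 0) (b := t) hΔt.le (Nat.le_add_right p W)
    push_cast at this
    linarith
  exact (intervalIntegral.integral_mono_interval hstart hpW le_rfl
    (ae_of_all _ fun s => abs_nonneg _)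
    (intervalIntegrable_abs_of_mem_Dset hδ (le_max_right _ _) (hstart.trans hpW) (hcT _))).trans
    (hδ.2.2 _ ⟨(hc _).1, hcT _⟩)

end Dset

section indicator

variable {K : ℕ}

theorem indicator_mem_DK {W g : ℕ} {E : Finset ℕ}
    (hE : ∀ p, (E ∩ Finset.Ico p (p + W)).card ≤ g) :
    (fun l : Fin K => if (l : ℕ) ∈ E then (-1 : ℝ) else 0) ∈ DK K W g := by
  rw [mem_DK_iff]
  refine ⟨fun l => by split_ifs <;> simp, fun p => ?_⟩
  calc ∑ i ∈ Finset.Ico p (p + W),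
        zeroExtend (fun l : Fin K => |if (l : ℕ) ∈ E then (-1 : ℝ) else 0|) i
      ≤ ∑ i ∈ Finset.Ico p (p + W), if i ∈ E then (1 : ℝ) else 0 :=
        Finset.sum_le_sum fun i _ => by unfold zeroExtend; split_ifs <;> simp_all
    _ ≤ g := by
        rw [Finset.sum_boole, Finset.filter_mem_eq_inter, Finset.inter_comm]
        exact_mod_cast hE p

theorem ysoc_indicator {Δt ηp ηm : ℝ} {xb xr d : Fin K → ℝ} (E : Finset ℕ) (y0 : ℝ) (k : ℕ) :
    ysoc Δt ηp ηm xb xr (fun l => if (l : ℕ) ∈ E then -1 else 0) d y0 k =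
      y0 + Δt * ∑ i ∈ Finset.range k, (if i ∈ E then zeroExtend (cellRate ηp ηm xb xr d (-1)) i
        else zeroExtend (cellRate ηp ηm xb xr d 0) i) := by
  rw [ysoc_eq, Finset.filter_congr (q := fun l : Fin K => (l : ℕ) ∈ Finset.range k)
    fun l _ => Finset.mem_range.symm, sum_filter_val_mem]
  congr 2
  refine Finset.sum_congr rfl fun i _ => ?_
  unfold zeroExtend
  split_ifs <;> simp_all

end indicator

theorem exists_ysoc_le_soc {Δt T Γ γ ηp ηm : ℝ} {K W g : ℕ} {xb xr d : Fin K → ℝ}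
    (hΔt : 0 < Δt) (hT : T = K * Δt) (hΓ : Γ = W * Δt) (hγ : γ = g * Δt)
    (hηp : ηp ∈ Ioc (0:ℝ) 1) (hηm : ηm ∈ Ioc (0:ℝ) 1) (hxr : ∀ l, 0 ≤ xr l) (y0 : ℝ)
    {δ : ℝ → ℝ} (hδ : δ ∈ Dset T Γ γ) {t : ℝ} (ht : t ∈ Icc 0 T) :
    ∃ δv ∈ DK K W g, ∃ k ≤ K,
      ysoc Δt ηp ηm xb xr δv d y0 k ≤ soc ηp ηm (lift Δt xb) (lift Δt xr) δ (lift Δt d) y0 t := by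
  set c := gridClamp Δt 0 t
  set φ₀ := zeroExtend (cellRate ηp ηm xb xr d 0)
  set φ₁ := zeroExtend (cellRate ηp ηm xb xr d (-1))
  -- Lengths and `|δ|`-masses of the cells of `[0, t]`, in units of `Δt`.
  set ℓ : ℕ → ℝ := fun i => (c (i + 1) - c i) / Δt
  set ν : ℕ → ℝ := fun i => (∫ s in c i..c (i + 1), |δ s|) / Δt
  have hlower : y0 + Δt * ∑ i ∈ Finset.range K, (ℓ i * φ₀ i + ν i * (φ₁ i - φ₀ i)) ≤
      soc ηp ηm (lift Δt xb) (lift Δt xr) δ (lift Δt d) y0 t := by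
    refine le_of_eq_of_le ?_ (soc_ge_sum_cells hΔt hηp.1.le hηm.1 (mul_le_one₀ hηp.2 hηm.1.le hηm.2)
      hxr hδ.1 ht.1 (hT ▸ ht.2) (fun s hs => abs_le.2 (hδ.2.1 s ⟨hs.1, hs.2.trans ht.2⟩)) y0)
    rw [Finset.mul_sum,
      ← Fin.sum_univ_eq_sum_range fun i => Δt * (ℓ i * φ₀ i + ν i * (φ₁ i - φ₀ i))]
    congr 1
    refine Finset.sum_congr rfl fun l _ => ?_
    simp only [ℓ, ν, φ₀, φ₁, zeroExtend_val]
    field_simp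
    ring
  obtain ⟨E, hE, k, hk, hsum⟩ := exists_prefix_sum_le (n := K) (k₀ := ⌊t / Δt⌋₊) φ₀ φ₁
    (fun i => div_nonneg (intervalIntegral.integral_nonneg
      (gridClamp_mono hΔt.le (Nat.le_succ i)) fun s _ => abs_nonneg _) hΔt.le)
    (fun i => div_le_div_of_nonneg_right (integral_abs_gridClamp_le hΔt hδ ht i) hΔt.le)
    (fun i => div_le_one_of_le₀ (gridClamp_succ_sub_le hΔt.le i) hΔt.le)
    (fun i hi => by simp [gridClamp_succ_sub_of_lt hΔt ht.1 hi, hΔt.ne'])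
    (fun i hi => by simp [gridClamp_succ_sub_of_gt hΔt ht.1 hi])
  refine ⟨_, indicator_mem_DK fun p => hE p (p + W) g ?_, k, hk, ?_⟩
  · rw [← Finset.sum_div, div_le_iff₀ hΔt, ← hγ]
    exact sum_Ico_integral_abs_gridClamp_le hΔt hΓ hδ ht p
  · rw [ysoc_indicator]
    exact (by gcongr : _ ≤ y0 + Δt * _).trans hlower

theorem stmt_9_general (Δt : ℝ) (K W g : ℕ) (hΔt : 0 < Δt)
    (T Γ γ : ℝ) (hT : T = K * Δt) (hΓ : Γ = W * Δt) (hγ : γ = g * Δt)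
    (ηp ηm : ℝ) (hηp : ηp ∈ Ioc (0:ℝ) 1) (hηm : ηm ∈ Ioc (0:ℝ) 1)
    (xb xr d : Fin K → ℝ)
    (hxr : ∀ l, 0 ≤ xr l)
    (y0 ylo : ℝ) :
    ((∀ δ ∈ Dset T Γ γ, ∀ t ∈ Icc (0:ℝ) T,
        ylo ≤ soc ηp ηm (lift Δt xb) (lift Δt xr) δ (lift Δt d) y0 t) ↔
      (∀ δv ∈ DK K W g, ∀ k ≤ K, ylo ≤ ysoc Δt ηp ηm xb xr δv d y0 k)) ∧
    sInf {v : ℝ | ∃ δ ∈ Dset T Γ γ, ∃ t ∈ Icc (0:ℝ) T,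
        v = soc ηp ηm (lift Δt xb) (lift Δt xr) δ (lift Δt d) y0 t} =
      sInf {v : ℝ | ∃ δv ∈ DK K W g, ∃ k ≤ K, v = ysoc Δt ηp ηm xb xr δv d y0 k} := by
  have hdisc {δv} (hδv : δv ∈ DK K W g) {k} (hk : k ≤ K) : ∃ δ ∈ Dset T Γ γ, ∃ t ∈ Icc (0:ℝ) T,
      soc ηp ηm (lift Δt xb) (lift Δt xr) δ (lift Δt d) y0 t = ysoc Δt ηp ηm xb xr δv d y0 k :=
    ⟨lift Δt δv, lift_mem_Dset hΔt hT hΓ hγ hδv, k * Δt, ⟨by positivity, hT ▸ by gcongr⟩,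
      soc_lift_natCast_mul hΔt δv y0 hk⟩
  have hcont {δ} (hδ : δ ∈ Dset T Γ γ) {t} (ht : t ∈ Icc (0:ℝ) T) :=
    exists_ysoc_le_soc (xb := xb) (d := d) hΔt hT hΓ hγ hηp hηm hxr y0 hδ ht
  refine ⟨⟨fun h δv hδv k hk => ?_, fun h δ hδ t ht => ?_⟩,
    csInf_eq_csInf_of_forall_exists_le ?_ ?_⟩
  · obtain ⟨δ, hδ, t, ht, heq⟩ := hdisc hδv hk
    exact heq ▸ h δ hδ t ht
  · obtain ⟨δv, hδv, k, hk, hle⟩ := hcont hδ ht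
    exact (h δv hδv k hk).trans hle
  · rintro _ ⟨δ, hδ, t, ht, rfl⟩
    obtain ⟨δv, hδv, k, hk, hle⟩ := hcont hδ ht
    exact ⟨_, ⟨δv, hδv, k, hk, rfl⟩, hle⟩
  · rintro _ ⟨δv, hδv, k, hk, rfl⟩
    obtain ⟨δ, hδ, t, ht, heq⟩ := hdisc hδv hk
    exact ⟨_, ⟨δ, hδ, t, ht, rfl⟩, heq.le⟩

/-- Proposition 7: the continuous robust lower bound on the
state-of-charge is equivalent to its discrete counterpart, and the worst-case
infima coincide. -/
theorem stmt_9 (Δt : ℝ) (K W g : ℕ) (hΔt : 0 < Δt)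
    (hg : 0 < g) (hgW : g ≤ W) (hWK : W ≤ K)
    (T Γ γ : ℝ) (hT : T = K * Δt) (hΓ : Γ = W * Δt) (hγ : γ = g * Δt)
    (ηp ηm : ℝ) (hηp : ηp ∈ Ioc (0:ℝ) 1) (hηm : ηm ∈ Ioc (0:ℝ) 1)
    (xb xr d : Fin K → ℝ)
    (hxb : ∀ l, 0 ≤ xb l) (hxr : ∀ l, 0 ≤ xr l) (hd : ∀ l, 0 ≤ d l)
    (hdx : ∀ l, d l = 0 ∨ (xb l = 0 ∧ xr l = 0))
    (y0 ylo : ℝ) :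
    ((∀ δ ∈ Dset T Γ γ, ∀ t ∈ Icc (0:ℝ) T,
        ylo ≤ soc ηp ηm (lift Δt xb) (lift Δt xr) δ (lift Δt d) y0 t) ↔
      (∀ δv ∈ DK K W g, ∀ k ≤ K, ylo ≤ ysoc Δt ηp ηm xb xr δv d y0 k)) ∧
    sInf {v : ℝ | ∃ δ ∈ Dset T Γ γ, ∃ t ∈ Icc (0:ℝ) T,
        v = soc ηp ηm (lift Δt xb) (lift Δt xr) δ (lift Δt d) y0 t} =
      sInf {v : ℝ | ∃ δv ∈ DK K W g, ∃ k ≤ K, v = ysoc Δt ηp ηm xb xr δv d y0 k} :=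
  stmt_9_general Δt K W g hΔt T Γ γ hT hΓ hγ ηp ηm hηp hηm xb xr d hxr y0 ylo
end
end

section
/- Let T > 0, 0 < γ ≤ Γ ≤ T, Δt > 0 with K = T/Δt a positive integer and γ/Δt, Γ/Δt positive integers. Let f : ℝ × [0,T] → ℝ be such that for every t, the map z ↦ f(z,t) is concave, continuous and nonincreasing, and for every z, the map t ↦ f(z,t) is constant on each trading interval [(k−1)Δt, kΔt), k ∈ {1,…,K}. Then for every t ∈ [0,T], inf_{δ ∈ D⁺} ∫₀ᵗ f(δ(s), s) ds = inf_{δ ∈ D⁺, δ(s) ∈ {0,1} for all s} ∫₀ᵗ f(δ(s), s) ds, i.e. the infimum over D⁺ equals the infimum over the {0,1}-valued elements of D⁺. -/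
/-!
Replace `δ ∈ D⁺` by its left-packed rearrangement: on each trading cell, the indicator of an
initial segment carrying the same mass as `δ`. On a cell, `f(·, s)` is a fixed concave
nonincreasing `φ`, which lies above its chord on `[0, 1]` and equals it on `{0, 1}`; the chord has
nonpositive slope and the packed scenario carries at least the mass of `δ` on every initial piece
of a cell, so the cost does not increase. The packed scenario stays in `D⁺` because `Γ` is a whole
number of cells: both ends of a window sit at the same offset in their cells, so the window's mass
is at most that of a window of `δ` ending on the grid.
-/

open MeasureTheory Set

noncomputable section

open scoped Interval

theorem intervalIntegrable_of_mem_Icc {w : ℝ → ℝ} (hw : Measurable w) {a b lo hi c d : ℝ}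
    (hwab : ∀ s ∈ Icc a b, w s ∈ Icc lo hi) (hc : c ∈ Icc a b) (hd : d ∈ Icc a b) :
    IntervalIntegrable w volume c d := by
  rw [intervalIntegrable_iff]
  refine Measure.integrableOn_of_bounded measure_Ioc_lt_top.ne hw.aestronglyMeasurable
    (M := max |lo| |hi|) (ae_restrict_of_forall_mem measurableSet_uIoc fun s hs => ?_)
  obtain ⟨hlo, hhi⟩ := hwab s (uIcc_subset_Icc hc hd (uIoc_subset_uIcc hs))
  exact abs_le_max_abs_abs hlo hhi

theorem Antitone.intervalIntegrable_comp {φ : ℝ → ℝ} (hφ : Antitone φ) {w : ℝ → ℝ}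
    (hw : Measurable w) {a b lo hi : ℝ} (hab : a ≤ b) (hwab : ∀ s ∈ Icc a b, w s ∈ Icc lo hi) :
    IntervalIntegrable (fun s => φ (w s)) volume a b :=
  intervalIntegrable_of_mem_Icc (hφ.measurable.comp hw)
    (fun s hs => ⟨hφ (hwab s hs).2, hφ (hwab s hs).1⟩) (left_mem_Icc.2 hab) (right_mem_Icc.2 hab)

theorem ConcaveOn.chord_le {φ : ℝ → ℝ} (hφ : ConcaveOn ℝ (Icc 0 1) φ) {z : ℝ} (hz : z ∈ Icc 0 1) :
    φ 0 + (φ 1 - φ 0) * z ≤ φ z := by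
  have h := hφ.2 (left_mem_Icc.2 zero_le_one) (right_mem_Icc.2 zero_le_one)
    (sub_nonneg.2 hz.2) hz.1 (sub_add_cancel 1 z)
  simp only [smul_eq_mul, mul_zero, mul_one, zero_add] at h
  linarith

theorem integral_comp_le_of_binary_of_integral_le {φ : ℝ → ℝ} (hconc : ConcaveOn ℝ (Icc 0 1) φ)
    (hanti : Antitone φ) {u w : ℝ → ℝ} (hu : Measurable u) (hw : Measurable w) {a b : ℝ}
    (hab : a ≤ b) (hu01 : ∀ s ∈ Icc a b, u s = 0 ∨ u s = 1)
    (hw01 : ∀ s ∈ Icc a b, w s ∈ Icc 0 1) (hmass : ∫ s in a..b, w s ≤ ∫ s in a..b, u s) :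
    ∫ s in a..b, φ (u s) ≤ ∫ s in a..b, φ (w s) := by
  set c := φ 1 - φ 0
  have hc : c ≤ 0 := sub_nonpos.2 (hanti zero_le_one)
  have hu01' : ∀ s ∈ Icc a b, u s ∈ Icc 0 1 := fun s hs => by
    rcases hu01 s hs with h | h <;> simp [h]
  have hui := intervalIntegrable_of_mem_Icc hu hu01' (left_mem_Icc.2 hab) (right_mem_Icc.2 hab)
  have hwi := intervalIntegrable_of_mem_Icc hw hw01 (left_mem_Icc.2 hab) (right_mem_Icc.2 hab)
  have hchord : ∀ v : ℝ → ℝ, IntervalIntegrable v volume a b →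
      ∫ s in a..b, (φ 0 + c * v s) = (b - a) * φ 0 + c * ∫ s in a..b, v s := fun v hv => by
    rw [intervalIntegral.integral_add intervalIntegrable_const (hv.const_mul c),
      intervalIntegral.integral_const, intervalIntegral.integral_const_mul, smul_eq_mul]
  calc ∫ s in a..b, φ (u s) = ∫ s in a..b, (φ 0 + c * u s) := by
        refine intervalIntegral.integral_congr fun s hs => ?_
        rcases hu01 s (uIcc_of_le hab ▸ hs) with h | h <;> simp [h, c]
    _ = (b - a) * φ 0 + c * ∫ s in a..b, u s := hchord u hui
    _ ≤ (b - a) * φ 0 + c * ∫ s in a..b, w s :=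
        add_le_add_right (mul_le_mul_of_nonpos_left hmass hc) _
    _ = ∫ s in a..b, (φ 0 + c * w s) := (hchord w hwi).symm
    _ ≤ ∫ s in a..b, φ (w s) :=
        intervalIntegral.integral_mono_on hab (intervalIntegrable_const.add (hwi.const_mul c))
          (hanti.intervalIntegrable_comp hw hab hw01) fun s hs => hconc.chord_le (hw01 s hs)

theorem integral_le_integral_of_forall_cell {Δt t : ℝ} {K : ℕ} (hΔt : 0 ≤ Δt)
    (ht : t ∈ Icc 0 (K * Δt)) {h₁ h₂ : ℝ → ℝ}
    (hcell : ∀ n < K, ∀ b ∈ Icc (n * Δt) ((n + 1) * Δt),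
      IntervalIntegrable h₁ volume (n * Δt) b ∧ IntervalIntegrable h₂ volume (n * Δt) b ∧
        ∫ s in n * Δt..b, h₁ s ≤ ∫ s in n * Δt..b, h₂ s) :
    ∫ s in 0..t, h₁ s ≤ ∫ s in 0..t, h₂ s := by
  set a : ℕ → ℝ := fun k => min t (k * Δt)
  have hpiece : ∀ n < K, IntervalIntegrable h₁ volume (a n) (a (n + 1)) ∧
      IntervalIntegrable h₂ volume (a n) (a (n + 1)) ∧
        ∫ s in a n..a (n + 1), h₁ s ≤ ∫ s in a n..a (n + 1), h₂ s := by
    intro n hn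
    simp only [a, Nat.cast_succ]
    rcases le_total t (n * Δt) with htn | hnt
    · rw [min_eq_left htn, min_eq_left (htn.trans (by nlinarith))]
      simp
    · rw [min_eq_right hnt]
      exact hcell n hn _ ⟨le_min hnt (by nlinarith), min_le_right _ _⟩
  have ha0 : a 0 = 0 := by simp [a, ht.1]
  have haK : a K = t := min_eq_left ht.2
  calc ∫ s in 0..t, h₁ s = ∑ k ∈ Finset.range K, ∫ s in a k..a (k + 1), h₁ s := by
        rw [intervalIntegral.sum_integral_adjacent_intervals fun n hn => (hpiece n hn).1, ha0, haK]
    _ ≤ ∑ k ∈ Finset.range K, ∫ s in a k..a (k + 1), h₂ s :=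
        Finset.sum_le_sum fun n hn => (hpiece n (Finset.mem_range.1 hn)).2.2
    _ = ∫ s in 0..t, h₂ s := by
        rw [intervalIntegral.sum_integral_adjacent_intervals fun n hn => (hpiece n hn).2.1, ha0,
          haK]

theorem min_sub_min_le_max (a b c d : ℝ) : min a b - min c d ≤ max (a - c) (b - d) := by
  rcases min_choice c d with h | h <;> rw [h]
  · linarith [min_le_left a b, le_max_left (a - c) (b - d)]
  · linarith [min_le_right a b, le_max_right (a - c) (b - d)]

theorem exists_nat_mem_Ioc_mul {Δt t : ℝ} {K : ℕ} (hΔt : 0 < Δt) (ht : t ∈ Ioc 0 (K * Δt)) :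
    ∃ n < K, t ∈ Ioc (n * Δt) ((n + 1) * Δt) := by
  set m := ⌈t / Δt⌉₊
  have hm : 0 < m := Nat.ceil_pos.2 (div_pos ht.1 hΔt)
  have hmK : m ≤ K := Nat.ceil_le.2 ((div_le_iff₀ hΔt).2 ht.2)
  have hcast : ((m - 1 : ℕ) : ℝ) + 1 = m := by rw [Nat.cast_sub hm, Nat.cast_one, sub_add_cancel]
  refine ⟨m - 1, by omega, ?_, ?_⟩
  · rw [← lt_div_iff₀ hΔt, ← add_lt_add_iff_right 1, hcast]
    exact Nat.ceil_lt_add_one (div_pos ht.1 hΔt).le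
  · rw [hcast, ← div_le_iff₀ hΔt]
    exact Nat.le_ceil _

theorem integral_le_min_of_mem_Icc {δ : ℝ → ℝ} (hδm : Measurable δ) {a b c : ℝ} (hab : a ≤ b)
    (hbc : b ≤ c) (hδ : ∀ s ∈ Icc a c, δ s ∈ Icc 0 1) :
    ∫ s in a..b, δ s ≤ min (b - a) (∫ s in a..c, δ s) := by
  have hac : a ≤ c := hab.trans hbc
  have hδi : ∀ x ∈ Icc a c, ∀ y ∈ Icc a c, IntervalIntegrable δ volume x y :=
    fun x hx y hy => intervalIntegrable_of_mem_Icc hδm hδ hx hy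
  refine le_min ?_ ?_
  · simpa using intervalIntegral.integral_mono_on hab
      (hδi a (left_mem_Icc.2 hac) b ⟨hab, hbc⟩) intervalIntegrable_const
      fun s hs => (hδ s ⟨hs.1, hs.2.trans hbc⟩).2
  · rw [← intervalIntegral.integral_add_adjacent_intervals (hδi a (left_mem_Icc.2 hac) b ⟨hab, hbc⟩)
      (hδi b ⟨hab, hbc⟩ c (right_mem_Icc.2 hac))]
    exact le_add_of_nonneg_right <| intervalIntegral.integral_nonneg hbc
      fun s hs => (hδ s ⟨hab.trans hs.1, hs.2⟩).1

section Cells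

variable {Δt : ℝ} {K n : ℕ}

theorem natCast_mul_mem_Icc (hΔt : 0 ≤ Δt) (hn : n ≤ K) : (n : ℝ) * Δt ∈ Icc 0 (K * Δt) :=
  ⟨by positivity, by gcongr⟩

theorem Icc_cell_subset (hΔt : 0 ≤ Δt) (hn : n < K) :
    Icc (n * Δt) ((n + 1) * Δt) ⊆ Icc 0 (K * Δt) :=
  Icc_subset_Icc (by positivity) (by gcongr; exact_mod_cast hn)

end Cells

def cellMass (Δt : ℝ) (δ : ℝ → ℝ) (n : ℕ) : ℝ :=
  ∫ s in n * Δt..(n + 1) * Δt, δ s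

/-- On each cell `[n Δt, (n + 1) Δt)` this is the indicator of `[n Δt, n Δt + cellMass Δt δ n]`. -/
def packLeft (Δt : ℝ) (δ : ℝ → ℝ) : ℝ → ℝ :=
  {s | s ≤ ⌊s / Δt⌋₊ * Δt + cellMass Δt δ ⌊s / Δt⌋₊}.indicator 1

section PackLeft

variable {Δt γ : ℝ} {δ : ℝ → ℝ} {K W n : ℕ}

theorem packLeft_eq_zero_or_one (s : ℝ) : packLeft Δt δ s = 0 ∨ packLeft Δt δ s = 1 :=
  indicator_eq_zero_or_self _ _ s

theorem packLeft_mem_Icc (s : ℝ) : packLeft Δt δ s ∈ Icc 0 1 := by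
  rcases packLeft_eq_zero_or_one (Δt := Δt) (δ := δ) s with h | h <;> simp [h]

theorem measurable_packLeft : Measurable (packLeft Δt δ) :=
  measurable_one.indicator <| measurableSet_le measurable_id <|
    (measurable_from_top (f := fun k : ℕ => (k : ℝ) * Δt + cellMass Δt δ k)).comp
      (measurable_id.div_const Δt).nat_floor

theorem intervalIntegrable_packLeft (a b : ℝ) : IntervalIntegrable (packLeft Δt δ) volume a b :=
  intervalIntegrable_of_mem_Icc measurable_packLeft (fun s _ => packLeft_mem_Icc s)
    (a := min a b) (b := max a b) left_mem_uIcc right_mem_uIcc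

theorem packLeft_of_mem_Ico (hΔt : 0 < Δt) {s : ℝ} (hs : s ∈ Ico (n * Δt) ((n + 1) * Δt)) :
    packLeft Δt δ s = {x | x ≤ n * Δt + cellMass Δt δ n}.indicator 1 s := by
  have hfloor : ⌊s / Δt⌋₊ = n := by
    rw [Nat.floor_eq_iff (div_nonneg ((by positivity : (0 : ℝ) ≤ n * Δt).trans hs.1) hΔt.le),
      le_div_iff₀ hΔt, div_lt_iff₀ hΔt]
    exact hs
  simp only [packLeft, indicator_apply, mem_ofPred_eq, hfloor]

theorem cellMass_mem_Icc (hΔt : 0 ≤ Δt) (hδm : Measurable δ)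
    (hδ : ∀ s ∈ Icc (n * Δt) ((n + 1) * Δt), δ s ∈ Icc 0 1) : cellMass Δt δ n ∈ Icc 0 Δt := by
  have hcell : n * Δt ≤ (n + 1) * Δt := by nlinarith
  refine ⟨intervalIntegral.integral_nonneg hcell fun s hs => (hδ s hs).1, ?_⟩
  calc cellMass Δt δ n ≤ (n + 1) * Δt - n * Δt :=
        (integral_le_min_of_mem_Icc hδm hcell le_rfl hδ).trans (min_le_left _ _)
    _ = Δt := by ring

theorem integral_packLeft_of_mem_cell (hΔt : 0 < Δt) (hm : 0 ≤ cellMass Δt δ n) {b : ℝ}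
    (hb : b ∈ Icc (n * Δt) ((n + 1) * Δt)) :
    ∫ s in n * Δt..b, packLeft Δt δ s = min (b - n * Δt) (cellMass Δt δ n) := by
  set c := n * Δt + cellMass Δt δ n
  have hae : ∀ᵐ s, s ∈ Ι (n * Δt) b → packLeft Δt δ s = {x | x ≤ c}.indicator 1 s := by
    filter_upwards [Measure.ae_ne volume ((n + 1) * Δt)] with s hne hs
    rw [uIoc_of_le hb.1] at hs
    exact packLeft_of_mem_Ico hΔt ⟨hs.1.le, (hs.2.trans hb.2).lt_of_ne hne⟩
  rw [intervalIntegral.integral_congr_ae hae]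
  rcases le_total c b with hcb | hbc
  · rw [intervalIntegral.integral_indicator ⟨le_add_of_nonneg_right hm, hcb⟩]
    simp [min_eq_right (show cellMass Δt δ n ≤ b - n * Δt by linarith)]
  · rw [intervalIntegral.integral_congr (g := fun _ => (1 : ℝ))
      fun s hs => indicator_of_mem (s := {x | x ≤ c})
        (((uIcc_of_le hb.1 ▸ hs) : s ∈ Icc _ _).2.trans hbc) 1]
    simp [min_eq_left (show b - n * Δt ≤ cellMass Δt δ n by linarith)]

theorem integral_packLeft_natCast_mul (hΔt : 0 < Δt) (hδm : Measurable δ)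
    (hδ : ∀ s ∈ Icc 0 (K * Δt), δ s ∈ Icc 0 1) (hn : n ≤ K) :
    ∫ s in 0..n * Δt, packLeft Δt δ s = ∫ s in 0..n * Δt, δ s := by
  have hδk : ∀ k < n, ∀ s ∈ Icc (k * Δt) ((k + 1) * Δt), δ s ∈ Icc 0 1 :=
    fun k hk s hs => hδ s (Icc_cell_subset hΔt.le (hk.trans_le hn) hs)
  have hcell : ∀ k < n, IntervalIntegrable δ volume (k * Δt) (((k + 1 : ℕ) : ℝ) * Δt) :=
    fun k hk => by
      push_cast
      exact intervalIntegrable_of_mem_Icc hδm (hδk k hk) (left_mem_Icc.2 (by nlinarith))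
        (right_mem_Icc.2 (by nlinarith))
  have hsum := intervalIntegral.sum_integral_adjacent_intervals (a := fun k : ℕ => k * Δt)
    (n := n) fun k _ => intervalIntegrable_packLeft (Δt := Δt) (δ := δ) _ _
  have hsum' := intervalIntegral.sum_integral_adjacent_intervals (a := fun k : ℕ => k * Δt) hcell
  simp only [Nat.cast_zero, zero_mul] at hsum hsum'
  rw [← hsum, ← hsum']
  refine Finset.sum_congr rfl fun k hk => ?_
  obtain ⟨hm0, hmΔ⟩ := cellMass_mem_Icc hΔt.le hδm (hδk k (Finset.mem_range.1 hk))
  push_cast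
  rw [integral_packLeft_of_mem_cell hΔt hm0 (right_mem_Icc.2 (by nlinarith)),
    min_eq_right (by linarith), cellMass]

theorem integral_packLeft_eq_min (hΔt : 0 < Δt) (hδm : Measurable δ)
    (hδ : ∀ s ∈ Icc 0 (K * Δt), δ s ∈ Icc 0 1) (hn : n < K) {t : ℝ}
    (ht : t ∈ Icc (n * Δt) ((n + 1) * Δt)) :
    ∫ s in 0..t, packLeft Δt δ s =
      min ((∫ s in 0..n * Δt, δ s) + (t - n * Δt)) (∫ s in 0..(n + 1) * Δt, δ s) := by
  have hcell := Icc_cell_subset hΔt.le hn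
  have hnn : n * Δt ≤ (n + 1) * Δt := by nlinarith
  have hδi : ∀ x ∈ Icc 0 (K * Δt), ∀ y ∈ Icc 0 (K * Δt), IntervalIntegrable δ volume x y :=
    fun x hx y hy => intervalIntegrable_of_mem_Icc hδm hδ hx hy
  have hsplit : ∫ s in 0..(n + 1) * Δt, δ s = (∫ s in 0..n * Δt, δ s) + cellMass Δt δ n :=
    (intervalIntegral.integral_add_adjacent_intervals
      (hδi 0 (left_mem_Icc.2 (by positivity)) _ (hcell (left_mem_Icc.2 hnn)))
      (hδi _ (hcell (left_mem_Icc.2 hnn)) _ (hcell (right_mem_Icc.2 hnn)))).symm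
  obtain ⟨hm0, -⟩ := cellMass_mem_Icc hΔt.le hδm fun s hs => hδ s (hcell hs)
  rw [← intervalIntegral.integral_add_adjacent_intervals (intervalIntegrable_packLeft 0 (n * Δt))
      (intervalIntegrable_packLeft _ t), integral_packLeft_natCast_mul hΔt hδm hδ hn.le,
    integral_packLeft_of_mem_cell hΔt hm0 ht, hsplit, min_add_add_left]

theorem integral_sub_integral_le_of_window (hΔt : 0 < Δt) (hδm : Measurable δ)
    (hδ : ∀ s ∈ Icc 0 (K * Δt), δ s ∈ Icc 0 1)
    (hwin : ∀ t ∈ Icc 0 (K * Δt), ∫ s in max (t - W * Δt) 0..t, δ s ≤ γ) {p : ℕ}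
    (hp : p + W ≤ K) : (∫ s in 0..(p + W : ℕ) * Δt, δ s) - ∫ s in 0..p * Δt, δ s ≤ γ := by
  have hmem := natCast_mul_mem_Icc hΔt.le hp
  have hlow : max (((p + W : ℕ) : ℝ) * Δt - W * Δt) 0 = p * Δt := by
    rw [max_eq_left (by push_cast; nlinarith)]
    push_cast
    ring
  have h0 : (0 : ℝ) ∈ Icc 0 (K * Δt) := ⟨le_rfl, hmem.1.trans hmem.2⟩
  have := hwin _ hmem
  rwa [hlow, ← intervalIntegral.integral_interval_sub_left
    (intervalIntegrable_of_mem_Icc hδm hδ h0 hmem) (intervalIntegrable_of_mem_Icc hδm hδ h0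
      (natCast_mul_mem_Icc hΔt.le (le_of_add_le_left hp)))] at this

theorem integral_packLeft_window_le (hΔt : 0 < Δt) (hδm : Measurable δ)
    (hδ : ∀ s ∈ Icc 0 (K * Δt), δ s ∈ Icc 0 1)
    (hwin : ∀ t ∈ Icc 0 (K * Δt), ∫ s in max (t - W * Δt) 0..t, δ s ≤ γ) {t : ℝ}
    (ht : t ∈ Icc 0 (K * Δt)) : ∫ s in max (t - W * Δt) 0..t, packLeft Δt δ s ≤ γ := by
  have hW : (0 : ℝ) ≤ W * Δt := by positivity
  rcases ht.1.eq_or_lt with rfl | ht0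
  · have := hwin 0 ht
    rw [max_eq_right (by linarith), intervalIntegral.integral_same] at this ⊢
    exact this
  obtain ⟨n, hn, htn⟩ := exists_nat_mem_Ioc_mul hΔt ⟨ht0, ht.2⟩
  rcases le_or_gt W n with hWn | hnW
  · obtain ⟨p, rfl⟩ : ∃ p, n = p + W := ⟨n - W, by omega⟩
    have hpW : ((p + W : ℕ) : ℝ) * Δt = p * Δt + W * Δt := by push_cast; ring
    have hpW1 : (((p + W : ℕ) : ℝ) + 1) * Δt = (p + 1) * Δt + W * Δt := by push_cast; ring
    have hshift : t - W * Δt ∈ Icc (p * Δt) ((p + 1) * Δt) := by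
      constructor <;> linarith [htn.1, htn.2]
    have h1 := integral_sub_integral_le_of_window hΔt hδm hδ hwin (p := p) (by omega)
    have h2 := integral_sub_integral_le_of_window hΔt hδm hδ hwin (p := p + 1) (by omega)
    rw [show p + 1 + W = p + W + 1 by omega, Nat.cast_succ, Nat.cast_succ] at h2
    rw [max_eq_left ((hshift.1).trans' (by positivity)),
      ← intervalIntegral.integral_interval_sub_left (intervalIntegrable_packLeft 0 t)
        (intervalIntegrable_packLeft 0 _),
      integral_packLeft_eq_min hΔt hδm hδ hn (Ioc_subset_Icc_self htn),
      integral_packLeft_eq_min hΔt hδm hδ (by omega) hshift,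
      show t - ((p + W : ℕ) : ℝ) * Δt = t - W * Δt - p * Δt by rw [hpW]; ring]
    refine (min_sub_min_le_max _ _ _ _).trans ?_
    rw [add_sub_add_right_eq_sub]
    exact max_le h1 h2
  · have hnW' : ((n : ℝ) + 1) * Δt ≤ W * Δt := by gcongr; exact_mod_cast hnW
    have hcell := Icc_cell_subset hΔt.le hn
    have := hwin _ (hcell (right_mem_Icc.2 (by nlinarith)))
    rw [max_eq_right (by linarith)] at this
    rw [max_eq_right (by linarith [htn.2]),
      integral_packLeft_eq_min hΔt hδm hδ hn (Ioc_subset_Icc_self htn)]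
    exact (min_le_right _ _).trans this

theorem packLeft_mem_DsetPlus (hΔt : 0 < Δt)
    (hδ : δ ∈ DsetPlus (K * Δt) (W * Δt) γ) : packLeft Δt δ ∈ DsetPlus (K * Δt) (W * Δt) γ := by
  obtain ⟨⟨hδm, -, hwin⟩, hδ01⟩ := hδ
  have hwin' : ∀ t ∈ Icc 0 (K * Δt), ∫ s in max (t - W * Δt) 0..t, δ s ≤ γ := fun t ht => by
    have hstart : max (t - W * Δt) 0 ∈ Icc 0 (K * Δt) :=
      ⟨le_max_right _ _, max_le (by nlinarith [ht.2]) (ht.1.trans ht.2)⟩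
    rw [← intervalIntegral.integral_congr fun s hs =>
      abs_of_nonneg (hδ01 s (uIcc_subset_Icc hstart ht hs)).1]
    exact hwin t ht
  refine ⟨⟨measurable_packLeft, fun s _ => ?_, fun t ht => ?_⟩, fun s _ => packLeft_mem_Icc s⟩
  · exact Icc_subset_Icc (by norm_num) le_rfl (packLeft_mem_Icc s)
  · simp_rw [abs_of_nonneg (packLeft_mem_Icc _).1]
    exact integral_packLeft_window_le hΔt hδm hδ01 hwin' ht

end PackLeft

def ConstantOnCells (Δt : ℝ) (K : ℕ) (f : ℝ → ℝ → ℝ) : Prop :=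
  ∀ z, ∀ k < K, ∀ s₁ ∈ Ico ((k : ℝ) * Δt) ((k + 1) * Δt),
    ∀ s₂ ∈ Ico ((k : ℝ) * Δt) ((k + 1) * Δt), f z s₁ = f z s₂

section Integrand

variable {Δt : ℝ} {K n : ℕ} {f : ℝ → ℝ → ℝ} {δ : ℝ → ℝ}

theorem ae_eq_at_cell_start (hΔt : 0 < Δt) (hpc : ConstantOnCells Δt K f) (hn : n < K)
    {b : ℝ} (hb : b ∈ Icc (n * Δt) ((n + 1) * Δt)) (w : ℝ → ℝ) :
    (fun s => f (w s) s) =ᵐ[volume.restrict (Ι (n * Δt) b)] fun s => f (w s) (n * Δt) := by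
  refine (ae_restrict_iff' measurableSet_uIoc).2 ?_
  filter_upwards [Measure.ae_ne volume ((n + 1) * Δt)] with s hne hs
  rw [uIoc_of_le hb.1] at hs
  exact hpc (w s) n hn s ⟨hs.1.le, (hs.2.trans hb.2).lt_of_ne hne⟩ _ ⟨le_rfl, by nlinarith⟩

theorem integral_comp_packLeft_le_on_cell (hΔt : 0 < Δt)
    (hconc : ∀ t, ConcaveOn ℝ univ (fun z => f z t)) (hanti : ∀ t, Antitone (fun z => f z t))
    (hpc : ConstantOnCells Δt K f)
    (hδm : Measurable δ) (hδ : ∀ s ∈ Icc (n * Δt) ((n + 1) * Δt), δ s ∈ Icc 0 1) (hn : n < K)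
    {b : ℝ} (hb : b ∈ Icc (n * Δt) ((n + 1) * Δt)) :
    IntervalIntegrable (fun s => f (packLeft Δt δ s) s) volume (n * Δt) b ∧
      IntervalIntegrable (fun s => f (δ s) s) volume (n * Δt) b ∧
        ∫ s in n * Δt..b, f (packLeft Δt δ s) s ≤ ∫ s in n * Δt..b, f (δ s) s := by
  have hδb : ∀ s ∈ Icc (n * Δt) b, δ s ∈ Icc 0 1 := fun s hs => hδ s ⟨hs.1, hs.2.trans hb.2⟩
  have hfreeze := ae_eq_at_cell_start hΔt hpc hn hb
  refine ⟨((hanti _).intervalIntegrable_comp measurable_packLeft hb.1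
      fun s _ => packLeft_mem_Icc s).congr_ae (hfreeze _).symm,
    ((hanti _).intervalIntegrable_comp hδm hb.1 hδb).congr_ae (hfreeze _).symm, ?_⟩
  rw [intervalIntegral.integral_congr_ae_restrict (hfreeze _),
    intervalIntegral.integral_congr_ae_restrict (hfreeze _)]
  refine integral_comp_le_of_binary_of_integral_le
    ((hconc _).subset (subset_univ _) (convex_Icc 0 1)) (hanti _) measurable_packLeft hδm hb.1
    (fun s _ => packLeft_eq_zero_or_one s) hδb ?_
  obtain ⟨hm0, -⟩ := cellMass_mem_Icc hΔt.le hδm hδ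
  rw [integral_packLeft_of_mem_cell hΔt hm0 hb]
  exact integral_le_min_of_mem_Icc hδm hb.1 hb.2 hδ

theorem integral_comp_packLeft_le (hΔt : 0 < Δt)
    (hconc : ∀ t, ConcaveOn ℝ univ (fun z => f z t)) (hanti : ∀ t, Antitone (fun z => f z t))
    (hpc : ConstantOnCells Δt K f)
    (hδm : Measurable δ) (hδ : ∀ s ∈ Icc 0 (K * Δt), δ s ∈ Icc 0 1) {t : ℝ}
    (ht : t ∈ Icc 0 (K * Δt)) :
    ∫ s in 0..t, f (packLeft Δt δ s) s ≤ ∫ s in 0..t, f (δ s) s :=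
  integral_le_integral_of_forall_cell hΔt.le ht fun _ hn _ hb =>
    integral_comp_packLeft_le_on_cell hΔt hconc hanti hpc hδm
      (fun s hs => hδ s (Icc_cell_subset hΔt.le hn hs)) hn hb

end Integrand

theorem stmt_12_general (Δt : ℝ) (K W : ℕ) (hΔt : 0 < Δt)
    (T Γ γ : ℝ) (hT : T = K * Δt) (hΓ : Γ = W * Δt)
    (f : ℝ → ℝ → ℝ)
    (hconc : ∀ t, ConcaveOn ℝ Set.univ (fun z => f z t))
    (hanti : ∀ t, Antitone (fun z => f z t))
    (hpc : ∀ z, ∀ k : ℕ, k < K →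
      ∀ s₁ ∈ Ico ((k : ℝ) * Δt) (((k : ℝ) + 1) * Δt),
      ∀ s₂ ∈ Ico ((k : ℝ) * Δt) (((k : ℝ) + 1) * Δt), f z s₁ = f z s₂) :
    ∀ t ∈ Icc (0:ℝ) T,
      sInf {v : ℝ | ∃ δ ∈ DsetPlus T Γ γ, v = ∫ s in (0:ℝ)..t, f (δ s) s} =
        sInf {v : ℝ | ∃ δ ∈ DsetPlus T Γ γ,
          (∀ s ∈ Icc (0:ℝ) T, δ s = 0 ∨ δ s = 1) ∧
          v = ∫ s in (0:ℝ)..t, f (δ s) s} := by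
  subst hT hΓ
  intro t ht
  refine csInf_eq_csInf_of_forall_exists_le ?_ ?_
  · rintro _ ⟨δ, hδ, rfl⟩
    exact ⟨_, ⟨packLeft Δt δ, packLeft_mem_DsetPlus hΔt hδ,
      fun s _ => packLeft_eq_zero_or_one s, rfl⟩,
      integral_comp_packLeft_le hΔt hconc hanti hpc hδ.1.1 hδ.2 ht⟩
  · rintro _ ⟨δ, hδ, -, rfl⟩
    exact ⟨_, ⟨δ, hδ, rfl⟩, le_rfl⟩

/-- Lemma 1: for a function `f(z,t)` that is concave,
continuous and nonincreasing in `z` and piecewise constant on the trading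
intervals in `t`, the infimum of `∫₀ᵗ f(δ(s),s) ds` over `D⁺` equals the
infimum over the `{0,1}`-valued elements of `D⁺`. -/
theorem stmt_12 (Δt : ℝ) (K W g : ℕ) (hΔt : 0 < Δt)
    (hg : 0 < g) (hgW : g ≤ W) (hWK : W ≤ K)
    (T Γ γ : ℝ) (hT : T = K * Δt) (hΓ : Γ = W * Δt) (hγ : γ = g * Δt)
    (f : ℝ → ℝ → ℝ)
    (hconc : ∀ t, ConcaveOn ℝ Set.univ (fun z => f z t))
    (hcont : ∀ t, Continuous (fun z => f z t))
    (hanti : ∀ t, Antitone (fun z => f z t))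
    (hpc : ∀ z, ∀ k : ℕ, k < K →
      ∀ s₁ ∈ Ico ((k : ℝ) * Δt) (((k : ℝ) + 1) * Δt),
      ∀ s₂ ∈ Ico ((k : ℝ) * Δt) (((k : ℝ) + 1) * Δt), f z s₁ = f z s₂) :
    ∀ t ∈ Icc (0:ℝ) T,
      sInf {v : ℝ | ∃ δ ∈ DsetPlus T Γ γ, v = ∫ s in (0:ℝ)..t, f (δ s) s} =
        sInf {v : ℝ | ∃ δ ∈ DsetPlus T Γ γ,
          (∀ s ∈ Icc (0:ℝ) T, δ s = 0 ∨ δ s = 1) ∧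
          v = ∫ s in (0:ℝ)..t, f (δ s) s} :=
  stmt_12_general Δt K W hΔt T Γ γ hT hΓ f hconc hanti hpc
end
end

section
/- Let K, N be positive integers and let W = N·Γ/Δt and g = N·γ/Δt be positive integers with g ≤ W. Define the polytope P = { δ ∈ [0,1]^{KN} : Σ_{l = 1+max(m−W,0)}^{m} δ_l ≤ g for every m ∈ {1,…,KN} }. Then every extreme point of P is a binary vector, i.e. lies in {0,1}^{KN}. -/
open MeasureTheory Set

noncomputable section

/-!
With the prefix sums `S j = ∑_{l < j} δ l`, every constraint of the polytope says that a
difference `S b - S a` lies in an interval with integer endpoints. If `δ l` is fractional, let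
`θ = Int.fract (S (l + 1))` and shift by `±ε` every `S j` with `Int.fract (S j) = θ`. A constraint
whose two prefix sums move differently has a non-integral value, hence is slack, and survives a
small shift; the others do not move at all. So `δ` is the midpoint of two distinct points of the
polytope.
-/

open Filter Topology

theorem eq_zero_of_mem_extremePoints_of_eventually_add_smul_mem {E : Type*} [AddCommGroup E]
    [Module ℝ E] {A : Set E} {x d : E} (hx : x ∈ A.extremePoints ℝ)
    (h : ∀ᶠ t in 𝓝 (0 : ℝ), x + t • d ∈ A) : d = 0 := by
  obtain ⟨ε, hε, hball⟩ := Metric.eventually_nhds_iff.1 h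
  have hmem : ∀ t : ℝ, |t| < ε → x + t • d ∈ A := fun t ht ↦ hball (by simpa using ht)
  have hseg : x ∈ openSegment ℝ (x + (ε / 2) • d) (x + (-(ε / 2)) • d) :=
    ⟨1 / 2, 1 / 2, by norm_num, by norm_num, by norm_num, by
      rw [smul_add, smul_add, smul_smul, smul_smul]; module⟩
  have hxε := hx.2 (hmem _ (by rw [abs_of_pos (half_pos hε)]; linarith))
    (hmem _ (by rw [abs_neg, abs_of_pos (half_pos hε)]; linarith)) hseg
  rw [add_eq_left, smul_eq_zero] at hxε
  exact hxε.resolve_left (half_pos hε).ne'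

theorem eventually_add_mul_mem {α β : ℝ} {s : Set ℝ} (hα : α ∈ s) (hβ : β ≠ 0 → s ∈ 𝓝 α) :
    ∀ᶠ t in 𝓝 (0 : ℝ), α + t * β ∈ s := by
  by_cases h : β = 0
  · simp [h, hα]
  · have : Continuous fun t : ℝ ↦ α + t * β := by fun_prop
    exact (this.tendsto' 0 α (by simp)).eventually_mem (hβ h)

section PrefixSum

variable {n : ℕ}

def prefixSum (x : Fin n → ℝ) (j : ℕ) : ℝ :=
  ∑ l ∈ Finset.univ.filter (fun l : Fin n ↦ (l : ℕ) < j), x l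

@[simp]
theorem prefixSum_zero (x : Fin n → ℝ) : prefixSum x 0 = 0 := by
  simp [prefixSum]

theorem prefixSum_succ (x : Fin n → ℝ) (j : ℕ) :
    prefixSum x (j + 1) = prefixSum x j + if h : j < n then x ⟨j, h⟩ else 0 := by
  unfold prefixSum
  split_ifs with h
  · have : Finset.univ.filter (fun l : Fin n ↦ (l : ℕ) < j + 1) =
        insert ⟨j, h⟩ (Finset.univ.filter (fun l : Fin n ↦ (l : ℕ) < j)) := by
      ext l; simp [Fin.ext_iff]; omega
    rw [this, Finset.sum_insert (by simp), add_comm]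
  · rw [add_zero]
    refine Finset.sum_congr ?_ fun _ _ ↦ rfl
    ext l
    simp only [Finset.mem_filter, Finset.mem_univ, true_and]
    omega

theorem apply_eq_prefixSum_sub (x : Fin n → ℝ) (l : Fin n) :
    x l = prefixSum x (l + 1) - prefixSum x l := by
  simp [prefixSum_succ]

def intervalSum (x : Fin n → ℝ) (a b : ℕ) : ℝ :=
  ∑ l ∈ Finset.univ.filter (fun l : Fin n ↦ a ≤ l ∧ (l : ℕ) < b), x l

theorem intervalSum_eq_prefixSum_sub (x : Fin n → ℝ) (a b : ℕ) :
    intervalSum x a b = prefixSum x b - prefixSum x (min a b) := by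
  set below : ℕ → Finset (Fin n) := fun j ↦ Finset.univ.filter fun l : Fin n ↦ (l : ℕ) < j
  have hlow : (below b).filter (fun l : Fin n ↦ (l : ℕ) < a) = below (min a b) := by
    ext l; simp only [below, Finset.mem_filter, Finset.mem_univ, true_and]; omega
  have hhigh : (below b).filter (fun l : Fin n ↦ ¬(l : ℕ) < a) =
      Finset.univ.filter fun l : Fin n ↦ a ≤ l ∧ (l : ℕ) < b := by
    ext l; simp only [below, Finset.mem_filter, Finset.mem_univ, true_and]; omega
  rw [intervalSum, prefixSum, prefixSum, ← Finset.sum_filter_add_sum_filter_not (below b)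
    (fun l : Fin n ↦ (l : ℕ) < a) x, hlow, hhigh, add_sub_cancel_left]

theorem intervalSum_add_smul (x d : Fin n → ℝ) (t : ℝ) (a b : ℕ) :
    intervalSum (x + t • d) a b = intervalSum x a b + t * intervalSum d a b := by
  simp only [intervalSum, Pi.add_apply, Pi.smul_apply, smul_eq_mul, Finset.sum_add_distrib,
    Finset.mul_sum]

theorem prefixSum_sub_comp_prefixSum (x : Fin n → ℝ) (φ : ℝ → ℝ) (j : ℕ) :
    prefixSum (fun l : Fin n ↦ φ (prefixSum x (l + 1)) - φ (prefixSum x l)) j =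
      φ (prefixSum x j) - φ (prefixSum x 0) := by
  induction j with
  | zero => simp
  | succ j ih =>
    rw [prefixSum_succ, ih]
    split_ifs with h <;> simp [prefixSum_succ x j, h]

end PrefixSum

def fractIndicator (θ y : ℝ) : ℝ := if Int.fract y = θ then 1 else 0

theorem fractIndicator_eq_of_sub_eq_intCast {θ u v : ℝ} {z : ℤ} (h : u - v = z) :
    fractIndicator θ u = fractIndicator θ v := by
  simp only [fractIndicator, Int.fract_eq_fract.2 ⟨z, h⟩]

theorem intCast_ne_of_mem_Ioo {y : ℝ} (hy : y ∈ Ioo (0 : ℝ) 1) (z : ℤ) : y ≠ z := by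
  rintro rfl
  obtain ⟨h0, h1⟩ := hy
  have : (0 : ℤ) < z := by exact_mod_cast h0
  have : z < 1 := by exact_mod_cast h1
  omega

def intervalPolytope {ι : Type*} (n : ℕ) (a b : ι → ℕ) (c : ι → ℤ) : Set (Fin n → ℝ) :=
  {δ | (∀ l, δ l ∈ Icc (0 : ℝ) 1) ∧ ∀ i, intervalSum δ (a i) (b i) ≤ c i}

section IntervalPolytope

variable {ι : Type*} [Finite ι] {n : ℕ} {a b : ι → ℕ} {c : ι → ℤ}

theorem eventually_add_smul_mem_intervalPolytope {x d : Fin n → ℝ}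
    (hx : x ∈ intervalPolytope n a b c) (hcoord : ∀ l, d l ≠ 0 → x l ∈ Ioo 0 1)
    (hinterval : ∀ i, intervalSum d (a i) (b i) ≠ 0 → intervalSum x (a i) (b i) < c i) :
    ∀ᶠ t in 𝓝 (0 : ℝ), x + t • d ∈ intervalPolytope n a b c := by
  simp only [intervalPolytope, Set.mem_ofPred_eq, intervalSum_add_smul, Pi.add_apply,
    Pi.smul_apply, smul_eq_mul]
  refine (eventually_all.2 fun l ↦ ?_).and (eventually_all.2 fun i ↦ ?_)
  · exact eventually_add_mul_mem (hx.1 l) fun h ↦ Icc_mem_nhds (hcoord l h).1 (hcoord l h).2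
  · exact eventually_add_mul_mem (s := Iic (c i : ℝ)) (hx.2 i) fun h ↦
      Iic_mem_nhds (hinterval i h)

theorem eq_zero_or_eq_one_of_mem_extremePoints_intervalPolytope {x : Fin n → ℝ}
    (hx : x ∈ (intervalPolytope n a b c).extremePoints ℝ) (l : Fin n) : x l = 0 ∨ x l = 1 := by
  by_contra! hl
  have hxl : x l ∈ Ioo 0 1 := ⟨(hx.1.1 l).1.lt_of_ne' hl.1, (hx.1.1 l).2.lt_of_ne hl.2⟩
  set S := prefixSum x
  set φ := fractIndicator (Int.fract (S (l + 1)))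
  -- up to a constant, moving `x` by `t • d` shifts by `t` exactly the `S j` with fractional part
  -- `Int.fract (S (l + 1))`
  set d : Fin n → ℝ := fun k ↦ φ (S (k + 1)) - φ (S k)
  have hd_interval (a' b' : ℕ) : intervalSum d a' b' = φ (S b') - φ (S (min a' b')) := by
    rw [intervalSum_eq_prefixSum_sub, prefixSum_sub_comp_prefixSum, prefixSum_sub_comp_prefixSum]
    ring
  have hcoord : ∀ k, d k ≠ 0 → x k ∈ Ioo 0 1 := by
    intro k hk
    have hint (z : ℤ) : x k ≠ z := fun hz ↦ hk <| sub_eq_zero.2 <|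
      fractIndicator_eq_of_sub_eq_intCast ((apply_eq_prefixSum_sub x k).symm.trans hz)
    exact ⟨(hx.1.1 k).1.lt_of_ne' (by simpa using hint 0),
      (hx.1.1 k).2.lt_of_ne (by simpa using hint 1)⟩
  have hinterval : ∀ i, intervalSum d (a i) (b i) ≠ 0 → intervalSum x (a i) (b i) < c i := by
    intro i hi
    refine (hx.1.2 i).lt_of_ne fun h ↦ hi ?_
    rw [hd_interval, sub_eq_zero]
    exact fractIndicator_eq_of_sub_eq_intCast ((intervalSum_eq_prefixSum_sub x _ _).symm.trans h)
  have hdl : d l = 1 := by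
    have : Int.fract (S l) ≠ Int.fract (S (l + 1)) := fun h ↦ by
      obtain ⟨z, hz⟩ := Int.fract_eq_fract.1 h.symm
      exact intCast_ne_of_mem_Ioo hxl z ((apply_eq_prefixSum_sub x l).trans hz)
    simp [d, φ, fractIndicator, this]
  have hd := eq_zero_of_mem_extremePoints_of_eventually_add_smul_mem hx
    (eventually_add_smul_mem_intervalPolytope hx.1 hcoord hinterval)
  simp [hd] at hdl

end IntervalPolytope

theorem stmt_13_general (K N W0 g0 : ℕ)
    (x : Fin (K * N) → ℝ)
    (hx : x ∈ Set.extremePoints ℝ {δ : Fin (K * N) → ℝ |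
      (∀ l, δ l ∈ Icc (0:ℝ) 1) ∧
      ∀ m : Fin (K * N),
        (∑ l ∈ Finset.univ.filter
          (fun l : Fin (K * N) =>
            (m : ℕ) + 1 - N * W0 ≤ (l : ℕ) ∧ (l : ℕ) ≤ (m : ℕ)), δ l)
          ≤ ((N * g0 : ℕ) : ℝ)}) :
    ∀ l, x l = 0 ∨ x l = 1 := by
  intro l
  refine eq_zero_or_eq_one_of_mem_extremePoints_intervalPolytope
    (a := fun m : Fin (K * N) ↦ (m : ℕ) + 1 - N * W0) (b := fun m ↦ (m : ℕ) + 1)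
    (c := fun _ ↦ ((N * g0 : ℕ) : ℤ)) ?_ l
  simpa only [intervalPolytope, intervalSum, Nat.lt_succ_iff, Int.cast_natCast] using hx

/-- Lemma 2, total unimodularity: every extreme point of the
refined budget polytope `D⁺_{KN}` is a binary vector. -/
theorem stmt_13 (K N W0 g0 : ℕ) (hK : 0 < K) (hN : 0 < N)
    (hg0 : 0 < g0) (hg0W0 : g0 ≤ W0)
    (Δt Γ γ : ℝ) (hΔt : 0 < Δt) (hΓ : Γ = W0 * Δt) (hγ : γ = g0 * Δt)
    (x : Fin (K * N) → ℝ)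
    (hx : x ∈ Set.extremePoints ℝ {δ : Fin (K * N) → ℝ |
      (∀ l, δ l ∈ Icc (0:ℝ) 1) ∧
      ∀ m : Fin (K * N),
        (∑ l ∈ Finset.univ.filter
          (fun l : Fin (K * N) =>
            (m : ℕ) + 1 - N * W0 ≤ (l : ℕ) ∧ (l : ℕ) ≤ (m : ℕ)), δ l)
          ≤ ((N * g0 : ℕ) : ℝ)}) :
    ∀ l, x l = 0 ∨ x l = 1 :=
  stmt_13_general K N W0 g0 x hx
end
end

section
/- Let T > 0, 0 < γ ≤ Γ ≤ T, Δt > 0 with K = T/Δt a positive integer and γ/Δt, Γ/Δt positive integers, and let N be a positive integer. Define the refined discrete set D⁺_{KN} = { δ ∈ [0,1]^{KN} : Σ_{l = 1+max(m−NΓ/Δt,0)}^{m} δ_l ≤ Nγ/Δt for every m ∈ {1,…,KN} }, the refined lifting operator L_N which sends δ ∈ ℝ^{KN} (indexed by (k,n) with k ∈ {1,…,K}, n ∈ {1,…,N}) to the piecewise constant function equal to δ_{(k−1)N+n} on [Δt(k−1+(n−1)/N), Δt(k−1+n/N)), and the refined averaging operator L†_N which sends an integrable w on [0,T] to the vector with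 components (N/Δt)·∫ over the corresponding subinterval of w. Then L_N(D⁺_{KN}) ⊆ D⁺ and L†_N(D⁺) = D⁺_{KN}. -/
/-!
On the grid of mesh `h` the lift of a vector is constant on each cell. Writing `t = k h + θ`
with `θ ∈ [0, h]`, the window integral `∫_{max(t - W h, 0)}^t` of the lift is therefore
`(h - θ) S_k + θ S_{k+1}`, where `S_j` is the discrete window sum ending just before index `j`:
a convex combination of `h S_k` and `h S_{k+1}`, both at most `g h`. Conversely, the averages of
a function in `D⁺` over consecutive cells sum to `1/h` times its integral over their union, which
turns the continuous window constraint at `t = j h` into the discrete one, and averaging a lift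
returns the vector. The refinement into `N` subcells is this statement on the grid of mesh
`Δt / N` with `K`, `W`, `g` multiplied by `N`.
-/

open MeasureTheory Set

noncomputable section

def extendByZero {K : ℕ} (v : Fin K → ℝ) (l : ℕ) : ℝ :=
  if h : l < K then v ⟨l, h⟩ else 0

theorem extendByZero_of_lt {K : ℕ} (v : Fin K → ℝ) {l : ℕ} (hl : l < K) :
    extendByZero v l = v ⟨l, hl⟩ :=
  dif_pos hl

theorem max_natCast_mul_sub_natCast_mul (h : ℝ) (hh : 0 ≤ h) (j W : ℕ) :
    max ((j : ℝ) * h - W * h) 0 = ((j - W : ℕ) : ℝ) * h := by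
  rcases le_total W j with hWj | hjW
  · rw [Nat.cast_sub hWj, sub_mul, max_eq_left]
    nlinarith [(Nat.cast_le (α := ℝ)).2 hWj]
  · rw [Nat.sub_eq_zero_of_le hjW, Nat.cast_zero, zero_mul, max_eq_right]
    nlinarith [(Nat.cast_le (α := ℝ)).2 hjW]

theorem sum_filter_window_eq {K : ℕ} (f : Fin K → ℝ) (a : ℕ) (k : Fin K) :
    ∑ l ∈ Finset.univ.filter (fun l : Fin K => a ≤ (l : ℕ) ∧ (l : ℕ) ≤ k), f l
      = ∑ l ∈ Finset.Ico a (k + 1), extendByZero f l := by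
  have hterm : ∀ l : Fin K, (if a ≤ (l : ℕ) ∧ (l : ℕ) ≤ k then f l else 0)
      = if a ≤ (l : ℕ) ∧ (l : ℕ) ≤ k then extendByZero f l else 0 := fun l => by
    rw [extendByZero_of_lt f l.isLt]
  rw [Finset.sum_filter, Finset.sum_congr rfl fun l _ => hterm l,
    Fin.sum_univ_eq_sum_range (fun m => if a ≤ m ∧ m ≤ k then extendByZero f m else 0),
    ← Finset.sum_filter]
  refine Finset.sum_congr (Finset.ext fun m => ?_) fun _ _ => rfl
  simp only [Finset.mem_filter, Finset.mem_range, Finset.mem_Ico]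
  omega

section Lift

variable {h : ℝ} {K : ℕ} (v : Fin K → ℝ)

theorem lift_eq_of_mem_Ico (hh : 0 < h) {k : ℕ} (hk : k < K) {s : ℝ}
    (hs : s ∈ Ico (k * h) ((k + 1) * h)) : lift h v s = v ⟨k, hk⟩ := by
  have hfloor : ⌊s / h⌋ = k := by
    rw [Int.floor_eq_iff, le_div_iff₀ hh, div_lt_iff₀ hh]
    exact_mod_cast hs
  simp only [lift, hfloor, Int.toNat_natCast, min_eq_left (Nat.le_sub_one_of_lt hk), dif_pos hk]

theorem lift_mem_of_forall_mem {S : Set ℝ} (hv : ∀ l, v l ∈ S) (h0 : (0 : ℝ) ∈ S)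
    (s : ℝ) : lift h v s ∈ S := by
  unfold lift
  split
  · exact hv _
  · exact h0

theorem measurable_lift_s14 : Measurable (lift h v) :=
  show Measurable
      ((fun n : ℕ => if hn : min n (K - 1) < K then v ⟨min n (K - 1), hn⟩ else 0) ∘
        fun t : ℝ => ⌊t / h⌋.toNat) from
    measurable_from_top.comp ((measurable_from_top (f := Int.toNat)).comp
      (Int.measurable_floor.comp (measurable_id.div_const h)))

theorem intervalIntegrable_lift (a b : ℝ) : IntervalIntegrable (lift h v) volume a b := by
  have hbound : ∀ s, lift h v s ∈ Icc (-∑ l, |v l|) (∑ l, |v l|) :=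
    lift_mem_of_forall_mem v (fun l => abs_le.1 (Finset.single_le_sum
      (fun i _ => abs_nonneg (v i)) (Finset.mem_univ l))) (by simp [Finset.sum_nonneg])
  exact (Measure.integrableOn_of_bounded measure_Icc_lt_top.ne
    (measurable_lift_s14 v).aestronglyMeasurable
    (ae_of_all _ fun s => abs_le.2 (hbound s))).intervalIntegrable

theorem integral_lift_of_subset_cell (hh : 0 < h) {k : ℕ} (hk : k < K) {a b : ℝ}
    (hka : k * h ≤ a) (hab : a ≤ b) (hb : b ≤ (k + 1) * h) :
    ∫ s in a..b, lift h v s = (b - a) * extendByZero v k := by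
  have hlift : ∀ᵐ s ∂volume, s ∈ Ioc a b → lift h v s = extendByZero v k := by
    filter_upwards [Measure.ae_ne volume b] with s hsb hs
    rw [extendByZero_of_lt v hk]
    exact lift_eq_of_mem_Ico v hh hk ⟨hka.trans hs.1.le, (lt_of_le_of_ne hs.2 hsb).trans_le hb⟩
  rw [intervalIntegral.integral_of_le hab, setIntegral_congr_ae measurableSet_Ioc hlift,
    setIntegral_const, Real.volume_real_Ioc_of_le hab, smul_eq_mul]

theorem integral_lift_grid (hh : 0 < h) {i j : ℕ} (hij : i ≤ j) (hj : j ≤ K) :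
    ∫ s in i * h..j * h, lift h v s = h * ∑ l ∈ Finset.Ico i j, extendByZero v l := by
  rw [← intervalIntegral.sum_integral_adjacent_intervals_Ico (a := fun n : ℕ => (n : ℝ) * h)
    hij fun _ _ => intervalIntegrable_lift v _ _, Finset.mul_sum]
  refine Finset.sum_congr rfl fun l hl => ?_
  have hlK : l < K := (Finset.mem_Ico.1 hl).2.trans_le hj
  push_cast
  rw [integral_lift_of_subset_cell v hh hlK le_rfl (by linarith) le_rfl]
  ring

theorem integral_lift_cell (hh : 0 < h) {k : ℕ} (hk : k < K) {θ : ℝ} (hθ : θ ∈ Icc 0 h) :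
    ∫ s in 0..k * h + θ, lift h v s
      = h * ∑ l ∈ Finset.Ico 0 k, extendByZero v l + θ * extendByZero v k := by
  rw [← intervalIntegral.integral_add_adjacent_intervals (b := k * h)
    (intervalIntegrable_lift v _ _) (intervalIntegrable_lift v _ _),
    ← integral_lift_grid v hh (Nat.zero_le k) hk.le, Nat.cast_zero, zero_mul,
    integral_lift_of_subset_cell v hh hk le_rfl (by linarith [hθ.1]) (by linarith [hθ.2])]
  ring

theorem integral_window_lift_cell (hh : 0 < h) (W : ℕ) {k : ℕ} (hk : k < K) {θ : ℝ}
    (hθ : θ ∈ Icc 0 h) :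
    ∫ s in max (k * h + θ - W * h) 0..k * h + θ, lift h v s
      = (h - θ) * ∑ l ∈ Finset.Ico (k - W) k, extendByZero v l
        + θ * ∑ l ∈ Finset.Ico (k + 1 - W) (k + 1), extendByZero v l := by
  rw [← intervalIntegral.integral_interval_sub_left (a := 0) (intervalIntegrable_lift v _ _)
    (intervalIntegrable_lift v _ _), integral_lift_cell v hh hk hθ]
  rcases le_or_gt W k with hWk | hkW
  · have hstart : max (k * h + θ - W * h) 0 = ((k - W : ℕ) : ℝ) * h + θ := by
      rw [Nat.cast_sub hWk, max_eq_left] <;> nlinarith [(Nat.cast_le (α := ℝ)).2 hWk, hθ.1]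
    have hprefix := Finset.sum_Ico_consecutive (extendByZero v) (Nat.zero_le (k - W)) (k.sub_le W)
    have hshift := (Finset.sum_Ico_succ_top (k.sub_le W) (extendByZero v)).symm.trans
      (Finset.sum_eq_sum_Ico_succ_bot (Nat.lt_succ_of_le (k.sub_le W)) (extendByZero v))
    rw [hstart, integral_lift_cell v hh ((k.sub_le W).trans_lt hk) hθ, Nat.sub_add_comm hWk]
    linear_combination -h * hprefix + θ * hshift
  · have hstart : max (k * h + θ - W * h) 0 = 0 := by
      rw [max_eq_right]
      nlinarith [(by exact_mod_cast hkW : (k : ℝ) + 1 ≤ W), hθ.2]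
    rw [hstart, intervalIntegral.integral_same, Nat.sub_eq_zero_of_le hkW.le,
      Nat.sub_eq_zero_of_le (Nat.succ_le_of_lt hkW), Finset.sum_Ico_succ_top (Nat.zero_le k)]
    ring

theorem integral_window_lift_le (hh : 0 < h) (W : ℕ) {c : ℝ}
    (hwin : ∀ j ≤ K, ∑ l ∈ Finset.Ico (j - W) j, extendByZero v l ≤ c) {t : ℝ}
    (ht : t ∈ Icc 0 (K * h)) :
    ∫ s in max (t - W * h) 0..t, lift h v s ≤ c * h := by
  rcases ht.2.eq_or_lt with rfl | htK
  · rw [max_natCast_mul_sub_natCast_mul h hh.le, integral_lift_grid v hh (K.sub_le W) le_rfl]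
    nlinarith [hwin K le_rfl]
  set k := ⌊t / h⌋₊
  have hk : k < K := by
    rwa [Nat.floor_lt (div_nonneg ht.1 hh.le), div_lt_iff₀ hh]
  have hθ : t - k * h ∈ Icc 0 h := by
    have hlo := (le_div_iff₀ hh).1 (Nat.floor_le (div_nonneg ht.1 hh.le))
    have hhi := (div_lt_iff₀ hh).1 (Nat.lt_floor_add_one (t / h))
    constructor <;> linarith
  have hcell := integral_window_lift_cell v hh W hk hθ
  rw [add_sub_cancel] at hcell
  rw [hcell]
  nlinarith [mul_le_mul_of_nonneg_left (hwin k hk.le) (sub_nonneg.2 hθ.2),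
    mul_le_mul_of_nonneg_left (hwin (k + 1) hk) hθ.1]

end Lift

theorem DKplus.sum_Ico_le {K W g : ℕ} {δ : Fin K → ℝ} (hδ : δ ∈ DKplus K W g) :
    ∀ j ≤ K, ∑ l ∈ Finset.Ico (j - W) j, extendByZero δ l ≤ g := by
  rintro (_ | j) hj
  · simp
  have hwin := hδ.1.2 ⟨j, hj⟩
  simp only [abs_of_nonneg (hδ.2 _)] at hwin
  exact (sum_filter_window_eq δ _ ⟨j, hj⟩).symm.trans_le hwin

theorem lift_mem_DsetPlus {h : ℝ} (hh : 0 < h) {K W g : ℕ} {δ : Fin K → ℝ}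
    (hδ : δ ∈ DKplus K W g) : lift h δ ∈ DsetPlus (K * h) (W * h) (g * h) := by
  have hunit : ∀ s, lift h δ s ∈ Icc 0 1 :=
    lift_mem_of_forall_mem δ (fun l => ⟨hδ.2 l, (abs_le.1 (hδ.1.1 l)).2⟩)
      ⟨le_rfl, zero_le_one⟩
  refine ⟨⟨measurable_lift_s14 δ, fun t _ => ⟨by linarith [(hunit t).1], (hunit t).2⟩,
    fun t ht => ?_⟩, fun t _ => hunit t⟩
  rw [intervalIntegral.integral_congr fun s _ => abs_of_nonneg (hunit s).1]
  exact integral_window_lift_le δ hh W (DKplus.sum_Ico_le hδ) ht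

theorem avg_lift {h : ℝ} (hh : 0 < h) {K : ℕ} (v : Fin K → ℝ) : avg h K (lift h v) = v := by
  funext k
  rw [avg, integral_lift_of_subset_cell v hh k.isLt le_rfl (by linarith) le_rfl,
    extendByZero_of_lt v k.isLt]
  field_simp
  ring

theorem natCast_mul_mem_Icc_s14 {h : ℝ} (hh : 0 ≤ h) {j K : ℕ} (hj : j ≤ K) :
    (j : ℝ) * h ∈ Icc 0 (K * h) :=
  ⟨by positivity, mul_le_mul_of_nonneg_right (Nat.cast_le.2 hj) hh⟩

theorem Dset.integrableOn {T Γ γ : ℝ} {δ : ℝ → ℝ} (hδ : δ ∈ Dset T Γ γ) :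
    IntegrableOn δ (Icc 0 T) :=
  Measure.integrableOn_of_bounded (M := 1) measure_Icc_lt_top.ne hδ.1.aestronglyMeasurable
    ((ae_restrict_iff' measurableSet_Icc).2 (ae_of_all _ fun t ht => abs_le.2 (hδ.2.1 t ht)))

theorem sum_Ico_extendByZero_avg {h : ℝ} (hh : 0 ≤ h) {K : ℕ} {w : ℝ → ℝ}
    (hw : IntegrableOn w (Icc 0 (K * h))) {i j : ℕ} (hij : i ≤ j) (hj : j ≤ K) :
    ∑ l ∈ Finset.Ico i j, extendByZero (avg h K w) l
      = (1 / h) * ∫ s in i * h..j * h, w s := by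
  have hcell : ∀ l ∈ Ico i j, IntervalIntegrable w volume (l * h) ((l + 1 : ℕ) * h) :=
    fun l hl => (hw.mono_set (uIcc_subset_Icc (natCast_mul_mem_Icc_s14 hh (hl.2.le.trans hj))
      (natCast_mul_mem_Icc_s14 hh (hl.2.trans_le hj)))).intervalIntegrable
  rw [← intervalIntegral.sum_integral_adjacent_intervals_Ico (a := fun n : ℕ => (n : ℝ) * h)
    hij hcell,
    Finset.mul_sum]
  refine Finset.sum_congr rfl fun l hl => ?_
  rw [extendByZero_of_lt _ ((Finset.mem_Ico.1 hl).2.trans_le hj), avg, Nat.cast_succ]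

theorem avg_mem_Icc {h : ℝ} (hh : 0 < h) {K : ℕ} {w : ℝ → ℝ}
    (hw : IntegrableOn w (Icc 0 (K * h))) (hunit : ∀ t ∈ Icc 0 (K * h), w t ∈ Icc 0 1)
    (k : Fin K) : avg h K w k ∈ Icc 0 1 := by
  have hsub : Icc ((k : ℕ) * h) ((k + 1 : ℕ) * h) ⊆ Icc 0 (K * h) :=
    Icc_subset_Icc (natCast_mul_mem_Icc_s14 hh.le k.isLt.le).1 (natCast_mul_mem_Icc_s14 hh.le k.isLt).2
  have hle : ((k : ℕ) : ℝ) * h ≤ (k + 1 : ℕ) * h := by gcongr; omega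
  have hlo : 0 ≤ ∫ s in (k : ℕ) * h..(k + 1 : ℕ) * h, w s :=
    intervalIntegral.integral_nonneg hle fun s hs => (hunit s (hsub hs)).1
  have hhi :
      ∫ s in (k : ℕ) * h..(k + 1 : ℕ) * h, w s ≤ ∫ _ in (k : ℕ) * h..(k + 1 : ℕ) * h, 1 :=
    intervalIntegral.integral_mono_on hle
      (hw.mono_set ((uIcc_of_le hle).trans_subset hsub)).intervalIntegrable
      intervalIntegrable_const fun s hs => (hunit s (hsub hs)).2
  rw [intervalIntegral.integral_const, smul_eq_mul, mul_one, Nat.cast_succ] at hhi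
  rw [Nat.cast_succ] at hlo
  rw [avg, one_div, mem_Icc, inv_mul_le_iff₀ hh]
  exact ⟨by positivity, by linarith⟩

theorem avg_mem_DKplus {h : ℝ} (hh : 0 < h) {K W g : ℕ} {δ : ℝ → ℝ}
    (hδ : δ ∈ DsetPlus (K * h) (W * h) (g * h)) : avg h K δ ∈ DKplus K W g := by
  have hint := Dset.integrableOn hδ.1
  have hunit := avg_mem_Icc hh hint hδ.2
  refine ⟨⟨fun l => abs_le.2 ⟨by linarith [(hunit l).1], (hunit l).2⟩, fun k => ?_⟩,
    fun l => (hunit l).1⟩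
  simp only [abs_of_nonneg (hunit _).1]
  have hend := natCast_mul_mem_Icc_s14 hh.le k.isLt
  have hstart := natCast_mul_mem_Icc_s14 hh.le ((Nat.sub_le (k + 1) W).trans k.isLt)
  have hwin := hδ.1.2.2 _ hend
  rw [max_natCast_mul_sub_natCast_mul h hh.le, intervalIntegral.integral_congr fun s hs =>
    abs_of_nonneg (hδ.2 s (uIcc_subset_Icc hstart hend hs)).1] at hwin
  rw [sum_filter_window_eq, sum_Ico_extendByZero_avg hh.le hint (Nat.sub_le _ _) k.isLt,
    one_div, inv_mul_le_iff₀ hh]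
  linarith

theorem stmt_14_general (Δt : ℝ) (K W g N : ℕ) (hΔt : 0 < Δt) (hN : 0 < N)
    (T Γ γ : ℝ) (hT : T = K * Δt) (hΓ : Γ = W * Δt) (hγ : γ = g * Δt) :
    (∀ δ ∈ DKplus (K * N) (N * W) (N * g), lift (Δt / N) δ ∈ DsetPlus T Γ γ) ∧
    (∀ δ ∈ DsetPlus T Γ γ, avg (Δt / N) (K * N) δ ∈ DKplus (K * N) (N * W) (N * g)) ∧
    (∀ v ∈ DKplus (K * N) (N * W) (N * g),
      ∃ δ ∈ DsetPlus T Γ γ, avg (Δt / N) (K * N) δ = v) := by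
  have hh : 0 < Δt / N := by positivity
  have hN' : (N : ℝ) ≠ 0 := by positivity
  have hrefine : DsetPlus T Γ γ
      = DsetPlus ((K * N : ℕ) * (Δt / N)) ((N * W : ℕ) * (Δt / N))
          ((N * g : ℕ) * (Δt / N)) := by
    subst hT hΓ hγ
    push_cast
    congr 1 <;> field_simp
  rw [hrefine]
  exact ⟨fun δ hδ => lift_mem_DsetPlus hh hδ, fun δ hδ => avg_mem_DKplus hh hδ,
    fun v hv => ⟨lift _ v, lift_mem_DsetPlus hh hv, avg_lift hh v⟩⟩

/-- for the refined discretization with `N` subintervals per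
trading interval, `L_N(D⁺_{KN}) ⊆ D⁺` and `L†_N(D⁺) = D⁺_{KN}`. -/
theorem stmt_14 (Δt : ℝ) (K W g N : ℕ) (hΔt : 0 < Δt) (hN : 0 < N)
    (hg : 0 < g) (hgW : g ≤ W) (hWK : W ≤ K)
    (T Γ γ : ℝ) (hT : T = K * Δt) (hΓ : Γ = W * Δt) (hγ : γ = g * Δt) :
    (∀ δ ∈ DKplus (K * N) (N * W) (N * g), lift (Δt / N) δ ∈ DsetPlus T Γ γ) ∧
    (∀ δ ∈ DsetPlus T Γ γ, avg (Δt / N) (K * N) δ ∈ DKplus (K * N) (N * W) (N * g)) ∧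
    (∀ v ∈ DKplus (K * N) (N * W) (N * g),
      ∃ δ ∈ DsetPlus T Γ γ, avg (Δt / N) (K * N) δ = v) :=
  stmt_14_general Δt K W g N hΔt hN T Γ γ hT hΓ hγ
end
end

section
/- Let Δt > 0, K a positive integer, 0 < γ ≤ Γ with γ/Δt and Γ/Δt positive integers such that Γ/Δt ≤ K, and η⁺, η⁻ ∈ (0,1]. Let 𝐱^b, 𝐱^r ∈ ℝ^K have nonnegative components, let 𝐝 ∈ ℝ^K, and fix y₀ ∈ ℝ and k ∈ {0,1,…,K}. Then max_{𝛅 ∈ D_K} y_k(𝐱^b,𝐱^r,𝛅,y₀) = y₀ + max_{𝛅 ∈ D_K⁺} Δt Σ_{l=1}^{k} ( η⁺·(x^b_l + δ_l x^r_l) − d_l ), where both maxima are attained. -/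
open MeasureTheory Set

noncomputable section

/-! Every summand of `y_k` is nondecreasing in the power `x^b_l + δ_l x^r_l`, and since
`x^r ≥ 0` that power only grows when `δ` is replaced by `|δ| ∈ D_K⁺`. On `D_K⁺` the power is
nonnegative, so `y_k` coincides there with the linear expression, which attains its maximum on the
compact set `D_K⁺`. -/

theorem isClosed_DK (K W g : ℕ) : IsClosed (DK K W g) := by
  simp only [DK, ofPred_and, ofPred_forall]
  exact (isClosed_iInter fun l => isClosed_le (by fun_prop) continuous_const).inter
    (isClosed_iInter fun k => isClosed_le (by fun_prop) continuous_const)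

theorem DK_subset_Icc (K W g : ℕ) : DK K W g ⊆ Icc (-1) 1 :=
  fun _ hδ => ⟨fun l => neg_le_of_abs_le (hδ.1 l), fun l => le_of_abs_le (hδ.1 l)⟩

theorem isCompact_DKplus (K W g : ℕ) : IsCompact (DKplus K W g) := by
  refine (isCompact_Icc.of_isClosed_subset (isClosed_DK K W g) (DK_subset_Icc K W g)).inter_right ?_
  simp only [ofPred_forall]
  exact isClosed_iInter fun l => isClosed_le continuous_const (continuous_apply l)

theorem zero_mem_DKplus (K W g : ℕ) : (0 : Fin K → ℝ) ∈ DKplus K W g :=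
  ⟨⟨fun _ => by simp, fun _ => by simp⟩, fun _ => le_rfl⟩

theorem abs_mem_DKplus {K W g : ℕ} {δ : Fin K → ℝ} (hδ : δ ∈ DK K W g) :
    (fun l => |δ l|) ∈ DKplus K W g :=
  ⟨⟨fun l => (abs_abs (δ l)).trans_le (hδ.1 l), fun k => by simpa only [abs_abs] using hδ.2 k⟩,
    fun l => abs_nonneg (δ l)⟩

theorem exists_isGreatest_of_le_comp {α : Type*} [TopologicalSpace α] {A B : Set α}
    {f F : α → ℝ} {φ : α → α} (hB : IsCompact B) (hBne : B.Nonempty) (hF : ContinuousOn F B)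
    (hBA : B ⊆ A) (hφ : MapsTo φ A B) (hf : ∀ x ∈ A, f x ≤ F (φ x)) (hfF : EqOn f F B) :
    ∃ M, IsGreatest {v | ∃ x ∈ A, v = f x} M ∧ IsGreatest {v | ∃ x ∈ B, v = F x} M := by
  obtain ⟨x₀, hx₀, hmax⟩ := hB.exists_isMaxOn hBne hF
  refine ⟨F x₀, ⟨⟨x₀, hBA hx₀, (hfF hx₀).symm⟩, ?_⟩, ⟨x₀, hx₀, rfl⟩, ?_⟩
  · rintro _ ⟨x, hx, rfl⟩
    exact (hf x hx).trans (hmax (hφ hx))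
  · rintro _ ⟨x, hx, rfl⟩
    exact hmax hx

def ysocLin (Δt ηp : ℝ) {K : ℕ} (xb xr δ d : Fin K → ℝ) (y0 : ℝ) (k : ℕ) : ℝ :=
  y0 + Δt * ∑ l ∈ Finset.univ.filter (fun l : Fin K => (l : ℕ) < k),
    (ηp * (xb l + δ l * xr l) - d l)

theorem continuous_ysocLin (Δt ηp : ℝ) {K : ℕ} (xb xr d : Fin K → ℝ) (y0 : ℝ) (k : ℕ) :
    Continuous fun δ => ysocLin Δt ηp xb xr δ d y0 k := by
  unfold ysocLin
  fun_prop

section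

variable {Δt ηp ηm : ℝ} {K : ℕ} {xb xr d : Fin K → ℝ}

theorem ysoc_eq_ysocLin (ηm : ℝ) (hxb : ∀ l, 0 ≤ xb l) (hxr : ∀ l, 0 ≤ xr l) {δ : Fin K → ℝ}
    (hδ : ∀ l, 0 ≤ δ l) (y0 : ℝ) (k : ℕ) :
    ysoc Δt ηp ηm xb xr δ d y0 k = ysocLin Δt ηp xb xr δ d y0 k := by
  unfold ysoc ysocLin
  congr 2
  refine Finset.sum_congr rfl fun l _ => ?_
  have hpos : 0 ≤ xb l + δ l * xr l := add_nonneg (hxb l) (mul_nonneg (hδ l) (hxr l))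
  rw [max_eq_left hpos, max_eq_right (neg_nonpos.mpr hpos)]
  ring

theorem ysoc_le_ysoc_abs (hΔt : 0 ≤ Δt) (hηp : 0 ≤ ηp) (hηm : 0 ≤ ηm) (hxr : ∀ l, 0 ≤ xr l)
    (δ : Fin K → ℝ) (y0 : ℝ) (k : ℕ) :
    ysoc Δt ηp ηm xb xr δ d y0 k ≤ ysoc Δt ηp ηm xb xr (fun l => |δ l|) d y0 k := by
  unfold ysoc
  gcongr with l
  all_goals first | exact le_abs_self (δ l) | exact hxr l

end

theorem stmt_15_general (Δt ηp ηm : ℝ) (K W g : ℕ) (hΔt : 0 < Δt)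
    (hηp : ηp ∈ Ioc (0:ℝ) 1) (hηm : ηm ∈ Ioc (0:ℝ) 1)
    (xb xr d : Fin K → ℝ) (hxb : ∀ l, 0 ≤ xb l) (hxr : ∀ l, 0 ≤ xr l)
    (y0 : ℝ) (k : ℕ) :
    ∃ M : ℝ,
      IsGreatest {v : ℝ | ∃ δ ∈ DK K W g, v = ysoc Δt ηp ηm xb xr δ d y0 k} M ∧
      IsGreatest {v : ℝ | ∃ δ ∈ DKplus K W g,
        v = y0 + Δt * ∑ l ∈ Finset.univ.filter (fun l : Fin K => (l : ℕ) < k),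
          (ηp * (xb l + δ l * xr l) - d l)} M :=
  exists_isGreatest_of_le_comp (isCompact_DKplus K W g) ⟨0, zero_mem_DKplus K W g⟩
    (continuous_ysocLin Δt ηp xb xr d y0 k).continuousOn inter_subset_left
    (fun _ => abs_mem_DKplus)
    (fun δ _ => (ysoc_le_ysoc_abs hΔt.le hηp.1.le hηm.1.le hxr δ y0 k).trans_eq
      (ysoc_eq_ysocLin ηm hxb hxr (fun l => abs_nonneg (δ l)) y0 k))
    (fun _ hδ => ysoc_eq_ysocLin ηm hxb hxr hδ.2 y0 k)

/-- the worst-case maximum of the discrete state-of-charge over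
`D_K` is attained and equals `y₀` plus the maximum of the linearized expression
over `D_K⁺`. -/
theorem stmt_15 (Δt ηp ηm : ℝ) (K W g : ℕ) (hΔt : 0 < Δt)
    (hg : 0 < g) (hgW : g ≤ W) (hWK : W ≤ K)
    (hηp : ηp ∈ Ioc (0:ℝ) 1) (hηm : ηm ∈ Ioc (0:ℝ) 1)
    (xb xr d : Fin K → ℝ) (hxb : ∀ l, 0 ≤ xb l) (hxr : ∀ l, 0 ≤ xr l)
    (y0 : ℝ) (k : ℕ) (hk : k ≤ K) :
    ∃ M : ℝ,
      IsGreatest {v : ℝ | ∃ δ ∈ DK K W g, v = ysoc Δt ηp ηm xb xr δ d y0 k} M ∧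
      IsGreatest {v : ℝ | ∃ δ ∈ DKplus K W g,
        v = y0 + Δt * ∑ l ∈ Finset.univ.filter (fun l : Fin K => (l : ℕ) < k),
          (ηp * (xb l + δ l * xr l) - d l)} M :=
  stmt_15_general Δt ηp ηm K W g hΔt hηp hηm xb xr d hxb hxr y0 k
end
end

section
/- (Strong LP duality for the budget-uncertainty constraint.) Let k be a positive integer, let W and g be positive integers with g ≤ W, and let c ∈ ℝ^k have nonnegative components. Define the primal value P = max { Σ_{l=1}^{k} c_l δ_l : δ ∈ [0,1]^k, Σ_{l = 1+max(m−W,0)}^{m} δ_l ≤ g for every m ∈ {1,…,k} } and the dual value Q = min { Σ_{l=1}^{k} ( Λ_l + g·Θ_l ) : Λ, Θ ∈ ℝ₊^k, Λ_l + Σ_{i=l}^{min(k, l+W−1)} Θ_i ≥ c_l for every l ∈ {1,…,k} }. Then P = Q, and both optima are attained. -/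
open MeasureTheory Set

noncomputable section

theorem farkasBartl {V : Type*} [AddCommGroup V] [Module ℝ V] :
    ∀ (m : ℕ) (a : Fin m → V →ₗ[ℝ] ℝ) (b : V →ₗ[ℝ] ℝ),
    (∀ x, (∀ i, 0 ≤ a i x) → 0 ≤ b x) →
    ∃ lam : Fin m → ℝ, (∀ i, 0 ≤ lam i) ∧ ∀ x, b x = ∑ i, lam i * a i x := by
  intro m
  induction m with
  | zero =>
    intro a b h
    refine ⟨fun i => 0, fun i => le_refl 0, fun x => ?_⟩
    have h1 := h x (fun i => i.elim0)
    have h2 := h (-x) (fun i => i.elim0)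
    simp only [map_neg, Left.nonneg_neg_iff] at h2
    simp only [Finset.univ_eq_empty, Finset.sum_empty]
    linarith
  | succ m ih =>
    intro a b h
    by_cases hc : ∀ x, (∀ i : Fin m, 0 ≤ a i.castSucc x) → 0 ≤ b x
    · obtain ⟨lam, hlam, heq⟩ := ih (fun i => a i.castSucc) b hc
      refine ⟨Fin.snoc lam 0, ?_, ?_⟩
      · intro i
        refine Fin.lastCases ?_ ?_ i
        · simp
        · intro j; simpa using hlam j
      · intro x
        rw [Fin.sum_univ_castSucc]
        simp [heq x]
    · push_neg at hc
      obtain ⟨y0, hy0, hby0⟩ := hc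
      have hlast : a (Fin.last m) y0 < 0 := by
        by_contra hh
        push_neg at hh
        exact absurd (h y0 (fun i => Fin.lastCases hh hy0 i)) (not_le.mpr hby0)
      set y : V := (-(a (Fin.last m) y0))⁻¹ • y0 with hy
      have hpos : (0:ℝ) < (-(a (Fin.last m) y0))⁻¹ := by
        apply inv_pos.mpr; linarith
      have hay : ∀ j, a j y = (-(a (Fin.last m) y0))⁻¹ * a j y0 := by
        intro j; simp [hy]
      have haylast : a (Fin.last m) y = -1 := by
        have hne : -(a (Fin.last m) y0) ≠ 0 := by linarith
        rw [hay, inv_mul_eq_div, div_eq_iff hne]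
        ring
      have hayi : ∀ i : Fin m, 0 ≤ a i.castSucc y := by
        intro i; rw [hay]; exact mul_nonneg hpos.le (hy0 i)
      have hby : b y < 0 := by
        have : b y = (-(a (Fin.last m) y0))⁻¹ * b y0 := by simp [hy]
        rw [this]
        exact mul_neg_of_pos_of_neg hpos hby0
      -- reduced functionals
      set L := a (Fin.last m) with hL
      have key : ∀ x : V, (∀ i : Fin m, 0 ≤ (a i.castSucc + (a i.castSucc y) • L) x) →
          0 ≤ (b + (b y) • L) x := by
        intro x hx
        have hx' : ∀ j : Fin (m+1), 0 ≤ a j (x + (L x) • y) := by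
          intro j
          refine Fin.lastCases ?_ ?_ j
          · simp only [map_add, _root_.map_smul, smul_eq_mul, ← hL, haylast]
            ring_nf
            simp [← hL]
          · intro i
            have := hx i
            simpa [map_add, _root_.map_smul, smul_eq_mul, mul_comm] using this
        have := h _ hx'
        simpa [map_add, _root_.map_smul, smul_eq_mul, mul_comm] using this
      obtain ⟨μ, hμ, hμeq⟩ := ih (fun i => a i.castSucc + (a i.castSucc y) • L) (b + (b y) • L) key
      refine ⟨Fin.snoc μ ((∑ i, μ i * a i.castSucc y) - b y), ?_, ?_⟩
      · intro i
        refine Fin.lastCases ?_ ?_ i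
        · simp only [Fin.snoc_last]
          have : 0 ≤ ∑ i, μ i * a i.castSucc y :=
            Finset.sum_nonneg fun i _ => mul_nonneg (hμ i) (hayi i)
          linarith
        · intro j; simpa using hμ j
      · intro x
        have hx := hμeq x
        simp only [LinearMap.add_apply, LinearMap.smul_apply, smul_eq_mul] at hx
        rw [Fin.sum_univ_castSucc]
        simp only [Fin.snoc_castSucc, Fin.snoc_last]
        have hsum : ∑ i : Fin m, μ i * (a i.castSucc x + a i.castSucc y * L x)
            = (∑ i : Fin m, μ i * a i.castSucc x)
              + (∑ i : Fin m, μ i * a i.castSucc y) * L x := by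
          rw [Finset.sum_mul, ← Finset.sum_add_distrib]
          congr 1; ext i; ring
        rw [hsum] at hx
        rw [← hL]
        linarith [hx]

theorem farkasBartl' {V : Type*} [AddCommGroup V] [Module ℝ V] {ι : Type*} [Fintype ι]
    (a : ι → V →ₗ[ℝ] ℝ) (b : V →ₗ[ℝ] ℝ)
    (h : ∀ x, (∀ i, 0 ≤ a i x) → 0 ≤ b x) :
    ∃ lam : ι → ℝ, (∀ i, 0 ≤ lam i) ∧ ∀ x, b x = ∑ i, lam i * a i x := by
  classical
  let e := Fintype.equivFin ι
  obtain ⟨lam, h1, h2⟩ := farkasBartl (Fintype.card ι) (fun j => a (e.symm j)) b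
    (fun x hx => h x (fun i => by simpa using hx (e i)))
  refine ⟨fun i => lam (e i), fun i => h1 _, fun x => ?_⟩
  rw [h2 x]
  exact Fintype.sum_equiv e.symm _ _ (fun j => by simp)


/-- the primal window ending at `m` -/
def winF (k W : ℕ) (m : Fin k) : Finset (Fin k) :=
  Finset.univ.filter (fun l : Fin k => (m : ℕ) + 1 - W ≤ (l : ℕ) ∧ (l : ℕ) ≤ (m : ℕ))

/-- the dual window starting at `l` -/
def dwinF (k W : ℕ) (l : Fin k) : Finset (Fin k) :=
  Finset.univ.filter
    (fun i : Fin k => (l : ℕ) ≤ (i : ℕ) ∧ (i : ℕ) ≤ min (k - 1) ((l : ℕ) + W - 1))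

theorem win_iff (k W : ℕ) (hk : 0 < k) (hW : 0 < W) (l i : Fin k) :
    i ∈ dwinF k W l ↔ l ∈ winF k W i := by
  have h1 := l.isLt
  have h2 := i.isLt
  simp only [winF, dwinF, Finset.mem_filter, Finset.mem_univ, true_and]
  omega

theorem weak_duality (k W g : ℕ) (hk : 0 < k) (hW : 0 < W)
    (c : Fin k → ℝ) (δ Λ Θ : Fin k → ℝ)
    (hδ1 : ∀ l, δ l ∈ Icc (0:ℝ) 1)
    (hδ2 : ∀ m : Fin k, (∑ l ∈ winF k W m, δ l) ≤ (g : ℝ))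
    (hΛ : ∀ l, 0 ≤ Λ l) (hΘ : ∀ l, 0 ≤ Θ l)
    (hfeas : ∀ l : Fin k, c l ≤ Λ l + ∑ i ∈ dwinF k W l, Θ i) :
    ∑ l, c l * δ l ≤ ∑ l, (Λ l + (g : ℝ) * Θ l) := by
  classical
  have step1 : ∑ l, c l * δ l ≤ ∑ l, (Λ l + ∑ i ∈ dwinF k W l, Θ i) * δ l := by
    apply Finset.sum_le_sum
    intro l _
    exact mul_le_mul_of_nonneg_right (hfeas l) (hδ1 l).1
  have step2 : ∑ l, (Λ l + ∑ i ∈ dwinF k W l, Θ i) * δ l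
      = (∑ l, Λ l * δ l) + ∑ l, (∑ i ∈ dwinF k W l, Θ i) * δ l := by
    rw [← Finset.sum_add_distrib]
    congr 1; ext l; ring
  have swap : ∑ l, (∑ i ∈ dwinF k W l, Θ i) * δ l
      = ∑ i, Θ i * ∑ l ∈ winF k W i, δ l := by
    have lhs : ∀ l : Fin k, (∑ i ∈ dwinF k W l, Θ i) * δ l
        = ∑ i : Fin k, if i ∈ dwinF k W l then Θ i * δ l else 0 := by
      intro l
      rw [Finset.sum_mul]
      rw [← Finset.sum_filter]
      congr 1
      simp [dwinF]
    have rhs : ∀ i : Fin k, Θ i * ∑ l ∈ winF k W i, δ l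
        = ∑ l : Fin k, if l ∈ winF k W i then Θ i * δ l else 0 := by
      intro i
      rw [Finset.mul_sum]
      rw [← Finset.sum_filter]
      congr 1
      simp [winF]
    simp only [lhs, rhs]
    rw [Finset.sum_comm]
    apply Finset.sum_congr rfl
    intro i _
    apply Finset.sum_congr rfl
    intro l _
    simp only [win_iff k W hk hW l i]
  have step3 : ∑ l, Λ l * δ l ≤ ∑ l, Λ l :=
    Finset.sum_le_sum fun l _ => by
      calc Λ l * δ l ≤ Λ l * 1 := mul_le_mul_of_nonneg_left (hδ1 l).2 (hΛ l)
        _ = Λ l := mul_one _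
  have step4 : ∑ i, Θ i * ∑ l ∈ winF k W i, δ l ≤ ∑ i, Θ i * (g : ℝ) :=
    Finset.sum_le_sum fun i _ => mul_le_mul_of_nonneg_left (hδ2 i) (hΘ i)
  calc ∑ l, c l * δ l ≤ (∑ l, Λ l * δ l) + ∑ l, (∑ i ∈ dwinF k W l, Θ i) * δ l := by
        rw [← step2]; exact step1
    _ ≤ (∑ l, Λ l) + ∑ i, Θ i * (g : ℝ) := by rw [swap]; exact add_le_add step3 step4
    _ = ∑ l, (Λ l + (g : ℝ) * Θ l) := by
        rw [Finset.sum_add_distrib]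
        congr 1
        exact Finset.sum_congr rfl fun i _ => mul_comm _ _


def Pf (k : ℕ) (l : Fin k) : ((Fin k → ℝ) × ℝ) →ₗ[ℝ] ℝ :=
  (LinearMap.proj l).comp (LinearMap.fst ℝ (Fin k → ℝ) ℝ)

def Tf (k : ℕ) : ((Fin k → ℝ) × ℝ) →ₗ[ℝ] ℝ := LinearMap.snd ℝ (Fin k → ℝ) ℝ

@[simp] lemma Pf_apply (k : ℕ) (l : Fin k) (z : (Fin k → ℝ) × ℝ) : Pf k l z = z.1 l := rfl

@[simp] lemma Tf_apply (k : ℕ) (z : (Fin k → ℝ) × ℝ) : Tf k z = z.2 := rfl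


theorem stmt17_aux (k W g : ℕ) (hk : 0 < k) (hW : 0 < W) (hg : 0 < g) (hgW : g ≤ W)
    (c : Fin k → ℝ) (hc : ∀ l, 0 ≤ c l) :
    ∃ M : ℝ,
      IsGreatest {v : ℝ | ∃ δ : Fin k → ℝ,
        (∀ l, δ l ∈ Icc (0:ℝ) 1) ∧
        (∀ m : Fin k, (∑ l ∈ winF k W m, δ l) ≤ (g : ℝ)) ∧
        v = ∑ l, c l * δ l} M ∧
      IsLeast {v : ℝ | ∃ Λ Θ : Fin k → ℝ,
        (∀ l, 0 ≤ Λ l) ∧ (∀ l, 0 ≤ Θ l) ∧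
        (∀ l : Fin k, c l ≤ Λ l + ∑ i ∈ dwinF k W l, Θ i) ∧
        v = ∑ l, (Λ l + (g : ℝ) * Θ l)} M := by
  classical
  -- the feasible set of the primal
  set Feas : Set (Fin k → ℝ) := {δ | (∀ l, δ l ∈ Icc (0:ℝ) 1) ∧
    ∀ m : Fin k, (∑ l ∈ winF k W m, δ l) ≤ (g : ℝ)} with hFeasdef
  have h0F : (0 : Fin k → ℝ) ∈ Feas := by
    constructor
    · intro l; exact ⟨le_refl _, zero_le_one⟩
    · intro m; simp
  have hsub : Feas ⊆ Icc (0 : Fin k → ℝ) 1 := by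
    intro δ hδ
    exact ⟨fun l => (hδ.1 l).1, fun l => (hδ.1 l).2⟩
  have hclosed : IsClosed Feas := by
    have h1 : IsClosed {δ : Fin k → ℝ | ∀ l, δ l ∈ Icc (0:ℝ) 1} := by
      have he : {δ : Fin k → ℝ | ∀ l, δ l ∈ Icc (0:ℝ) 1}
          = ⋂ l, (fun δ : Fin k → ℝ => δ l) ⁻¹' (Icc 0 1) := by
        ext δ; simp [Set.mem_iInter]
      rw [he]
      exact isClosed_iInter fun l => isClosed_Icc.preimage (continuous_apply l)
    have h2 : IsClosed {δ : Fin k → ℝ | ∀ m : Fin k, (∑ l ∈ winF k W m, δ l) ≤ (g:ℝ)} := by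
      have he : {δ : Fin k → ℝ | ∀ m : Fin k, (∑ l ∈ winF k W m, δ l) ≤ (g:ℝ)}
          = ⋂ m, (fun δ : Fin k → ℝ => ∑ l ∈ winF k W m, δ l) ⁻¹' (Iic (g:ℝ)) := by
        ext δ; simp [Set.mem_iInter]
      rw [he]
      exact isClosed_iInter fun m =>
        isClosed_Iic.preimage (continuous_finset_sum _ fun l _ => continuous_apply l)
    exact h1.inter h2
  have hcmpt : IsCompact Feas :=
    (isCompact_Icc (a := (0 : Fin k → ℝ)) (b := 1)).of_isClosed_subset hclosed hsub
  have hcont : ContinuousOn (fun δ : Fin k → ℝ => ∑ l, c l * δ l) Feas :=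
    (continuous_finset_sum _ fun l _ => continuous_const.mul (continuous_apply l)).continuousOn
  obtain ⟨δs, hδsF, hmax⟩ := hcmpt.exists_isMaxOn ⟨0, h0F⟩ hcont
  set M : ℝ := ∑ l, c l * δs l with hMdef
  have hmax' : ∀ δ ∈ Feas, ∑ l, c l * δ l ≤ M := fun δ hδ => hmax hδ
  -- Farkas setup
  set Tt := Tf k with hTt
  set P := Pf k with hP
  set a : ((Fin k ⊕ Fin k) ⊕ (Fin k ⊕ Fin 1)) → ((Fin k → ℝ) × ℝ) →ₗ[ℝ] ℝ :=
    Sum.elim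
      (Sum.elim P (fun l => Tt - P l))
      (Sum.elim (fun m => (g:ℝ) • Tt - ∑ l ∈ winF k W m, P l) (fun _ => Tt)) with ha
  set b : ((Fin k → ℝ) × ℝ) →ₗ[ℝ] ℝ := M • Tt - ∑ l, c l • P l with hb
  have hbapp : ∀ z : (Fin k → ℝ) × ℝ, b z = M * z.2 - ∑ l, c l * z.1 l := by
    intro z
    simp [hb, hTt, hP, LinearMap.sum_apply]
  have hyp : ∀ z, (∀ i, 0 ≤ a i z) → 0 ≤ b z := by
    rintro ⟨x, t⟩ hz
    have ht : 0 ≤ t := by simpa [ha, hTt] using hz (Sum.inr (Sum.inr 0))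
    have hx1 : ∀ l, 0 ≤ x l := fun l => by simpa [ha, hP] using hz (Sum.inl (Sum.inl l))
    have hx2 : ∀ l, x l ≤ t := fun l => by
      have := hz (Sum.inl (Sum.inr l))
      simp [ha, hTt, hP] at this
      linarith
    have hwin : ∀ m : Fin k, ∑ l ∈ winF k W m, x l ≤ (g:ℝ) * t := fun m => by
      have := hz (Sum.inr (Sum.inl m))
      simp [ha, hTt, hP, LinearMap.sum_apply] at this
      linarith
    rw [hbapp]
    simp only
    rcases eq_or_lt_of_le ht with h0 | hpos
    · have hx0 : ∀ l, x l = 0 := fun l => le_antisymm (by rw [h0]; exact hx2 l) (hx1 l)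
      simp [← h0, hx0]
    · have hfeas : (fun l => x l / t) ∈ Feas := by
        constructor
        · intro l
          exact ⟨div_nonneg (hx1 l) ht, (div_le_one hpos).mpr (hx2 l)⟩
        · intro m
          rw [← Finset.sum_div, div_le_iff₀ hpos]
          exact hwin m
      have hle := hmax' _ hfeas
      have heq : ∑ l, c l * (x l / t) = (∑ l, c l * x l) / t := by
        rw [Finset.sum_div]
        exact Finset.sum_congr rfl fun l _ => by ring
      rw [heq, div_le_iff₀ hpos] at hle
      linarith
  obtain ⟨lam, hlam, hlameq⟩ := farkasBartl' a b hyp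
  set α : Fin k → ℝ := fun l => lam (Sum.inl (Sum.inl l)) with hα
  set Λ : Fin k → ℝ := fun l => lam (Sum.inl (Sum.inr l)) with hΛ
  set Θ : Fin k → ℝ := fun m => lam (Sum.inr (Sum.inl m)) with hΘ
  set τ : ℝ := lam (Sum.inr (Sum.inr 0)) with hτ
  have hsum : ∀ z : (Fin k → ℝ) × ℝ, b z
      = (∑ l, α l * z.1 l) + (∑ l, Λ l * (z.2 - z.1 l))
        + (∑ m, Θ m * ((g:ℝ) * z.2 - ∑ l ∈ winF k W m, z.1 l)) + τ * z.2 := by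
    intro z
    rw [hlameq z]
    rw [Fintype.sum_sum_type, Fintype.sum_sum_type, Fintype.sum_sum_type]
    simp only [ha, hTt, hP, Sum.elim_inl, Sum.elim_inr, LinearMap.sub_apply,
      LinearMap.smul_apply, LinearMap.sum_apply, Pf_apply, Tf_apply, smul_eq_mul, hα, hΛ, hΘ, hτ]
    rw [Fin.sum_univ_one]
    ring
  -- dual feasibility
  have hdualfeas : ∀ j : Fin k, c j ≤ Λ j + ∑ i ∈ dwinF k W j, Θ i := by
    intro j
    have h1 := hsum (Pi.single j 1, 0)
    rw [hbapp] at h1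
    simp only [mul_zero, zero_sub, sub_zero, zero_mul] at h1
    have e1 : ∑ l, c l * (Pi.single j 1 : Fin k → ℝ) l = c j := by
      simp [Pi.single_apply, mul_ite]
    have e2 : ∑ l, α l * (Pi.single j 1 : Fin k → ℝ) l = α j := by
      simp [Pi.single_apply, mul_ite]
    have e3 : ∑ l, Λ l * -((Pi.single j 1 : Fin k → ℝ) l) = -Λ j := by
      have : ∀ l : Fin k, Λ l * -((Pi.single j 1 : Fin k → ℝ) l) = -(Λ l * (Pi.single j 1 : Fin k → ℝ) l) := by
        intro l; ring
      simp only [this, Finset.sum_neg_distrib]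
      simp [Pi.single_apply, mul_ite]
    have e4 : ∑ m, Θ m * -(∑ l ∈ winF k W m, (Pi.single j 1 : Fin k → ℝ) l)
        = -(∑ i ∈ dwinF k W j, Θ i) := by
      have einner : ∀ m : Fin k, (∑ l ∈ winF k W m, (Pi.single j 1 : Fin k → ℝ) l)
          = if j ∈ winF k W m then 1 else 0 := by
        intro m
        simp [Pi.single_apply]
      have : ∀ m : Fin k, Θ m * -(∑ l ∈ winF k W m, (Pi.single j 1 : Fin k → ℝ) l)
          = -(if j ∈ winF k W m then Θ m else 0) := by
        intro m
        rw [einner]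
        split <;> ring
      simp only [this, Finset.sum_neg_distrib]
      congr 1
      rw [← Finset.sum_filter]
      apply Finset.sum_congr _ (fun _ _ => rfl)
      ext m
      simp only [Finset.mem_filter, Finset.mem_univ, true_and]
      rw [← win_iff k W hk hW j m]
    rw [e1, e2, e3, e4] at h1
    have hαj : 0 ≤ α j := hlam (Sum.inl (Sum.inl j))
    linarith
  have hΛpos : ∀ l, 0 ≤ Λ l := fun l => hlam (Sum.inl (Sum.inr l))
  have hΘpos : ∀ l, 0 ≤ Θ l := fun l => hlam (Sum.inr (Sum.inl l))
  -- dual value ≤ M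
  have hdualval : ∑ l, (Λ l + (g:ℝ) * Θ l) ≤ M := by
    have h1 := hsum ((0 : Fin k → ℝ), 1)
    rw [hbapp] at h1
    have hτpos : 0 ≤ τ := hlam (Sum.inr (Sum.inr 0))
    simp only [Pi.zero_apply, mul_zero, mul_one, sub_zero, zero_mul, Finset.sum_const_zero,
      zero_add, add_zero] at h1
    have e : ∑ l, (Λ l + (g:ℝ) * Θ l) = (∑ l, Λ l) + ∑ m, Θ m * (g:ℝ) := by
      rw [Finset.sum_add_distrib]
      congr 1
      exact Finset.sum_congr rfl fun i _ => mul_comm _ _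
    rw [e]
    linarith [h1]
  have hge : M ≤ ∑ l, (Λ l + (g:ℝ) * Θ l) :=
    weak_duality k W g hk hW c δs Λ Θ hδsF.1 hδsF.2 hΛpos hΘpos hdualfeas
  refine ⟨M, ⟨⟨δs, hδsF.1, hδsF.2, rfl⟩, ?_⟩, ⟨⟨Λ, Θ, hΛpos, hΘpos, hdualfeas,
      le_antisymm hge hdualval⟩, ?_⟩⟩
  · rintro v ⟨δ, hδ1, hδ2, rfl⟩
    exact hmax' δ ⟨hδ1, hδ2⟩
  · rintro v ⟨Λ', Θ', hΛ', hΘ', hfeas', rfl⟩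
    exact weak_duality k W g hk hW c δs Λ' Θ' hδsF.1 hδsF.2 hΛ' hΘ' hfeas'


/-- strong LP duality for the budget-uncertainty constraint:
the primal maximum over the discrete budget polytope equals the dual minimum,
and both optima are attained. -/
theorem stmt_17 (k W g : ℕ) (hk : 0 < k) (hW : 0 < W) (hg : 0 < g) (hgW : g ≤ W)
    (c : Fin k → ℝ) (hc : ∀ l, 0 ≤ c l) :
    ∃ M : ℝ,
      IsGreatest {v : ℝ | ∃ δ : Fin k → ℝ,
        (∀ l, δ l ∈ Icc (0:ℝ) 1) ∧
        (∀ m : Fin k,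
          (∑ l ∈ Finset.univ.filter
            (fun l : Fin k => (m : ℕ) + 1 - W ≤ (l : ℕ) ∧ (l : ℕ) ≤ (m : ℕ)), δ l)
            ≤ (g : ℝ)) ∧
        v = ∑ l, c l * δ l} M ∧
      IsLeast {v : ℝ | ∃ Λ Θ : Fin k → ℝ,
        (∀ l, 0 ≤ Λ l) ∧ (∀ l, 0 ≤ Θ l) ∧
        (∀ l : Fin k, c l ≤ Λ l + ∑ i ∈ Finset.univ.filter
          (fun i : Fin k => (l : ℕ) ≤ (i : ℕ) ∧ (i : ℕ) ≤ min (k - 1) ((l : ℕ) + W - 1)), Θ i) ∧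
        v = ∑ l, (Λ l + (g : ℝ) * Θ l)} M :=
  stmt17_aux k W g hk hW hg hgW c hc
end
end
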